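/- arXiv:2604.14429 — 8 statements merged into one kernel-verified Lean document; each statement's English description precedes it below -/
import Mathlib

section
/- Let N ≥ 1 be an integer and let S_k = (s_{k;l,j})_{0≤l,j≤N−1} ∈ ℂ^{N×N} for k ≥ 0 with S_0 = E_N (the N×N identity matrix). Suppose there exist constants C > 0 and R > 0 such that |s_{k;l,j}| ≤ C·R^k for all l,j ∈ {0,…,N−1} and all k ≥ 1. Then there exist r > 0 and a measurable bounded function W : [0,2π] → ℂ^{N×N} such that W(θ) is a Hermitian positive semidefinite matrix for every θ, and ∫₀^{2π} (r e^{iθ})^k · W(θ) dθ = S_k for every k ≥ 0. (In particular the matrix moment problem ∫_ℂ z^k dM(z) = S_k, k ≥ 0, has a positive-matrix-valued solution supported on a circle centered at the origin.) -/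
open scoped ComplexOrder Matrix
open Finset Complex Real MeasureTheory

/-!
Write `z = r e^{iθ}` and `G(θ) = ∑_{m ≥ 1} z^{-m} S_m`, and take `W = (2π)⁻¹ (1 + G + Gᴴ)`.
Since `∫₀^{2π} e^{ipθ} dθ` vanishes unless `p = 0`, integrating `z^k W` term by term (the series
is dominated by a geometric one) leaves only the `m = k` term of `z^k G`, plus the identity
when `k = 0`; this gives `S_k`. For `r` large the entries of `G + Gᴴ` are small enough that its
absolute row sums are at most `1`, and then the Schur test `|x* H x| ≤ ‖x‖²` makes
`1 + G + Gᴴ` positive semidefinite.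
-/

namespace Matrix

variable {n : Type*} [Fintype n]

theorem IsHermitian.norm_star_dotProduct_mulVec_le {H : Matrix n n ℂ} (hH : H.IsHermitian)
    {c : ℝ} (hrow : ∀ i, ∑ j, ‖H i j‖ ≤ c) (x : n → ℂ) :
    ‖star x ⬝ᵥ (H *ᵥ x)‖ ≤ c * ∑ i, ‖x i‖ ^ 2 := by
  have hcol : ∀ j, ∑ i, ‖H i j‖ ≤ c := fun j => by
    simpa only [← hH.apply _ j, norm_star] using hrow j
  calc ‖star x ⬝ᵥ (H *ᵥ x)‖ ≤ ∑ i, ∑ j, ‖H i j‖ * (‖x i‖ * ‖x j‖) := by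
        refine (norm_sum_le _ _).trans (sum_le_sum fun i _ => ?_)
        rw [Pi.star_apply, mulVec, dotProduct, mul_sum]
        refine (norm_sum_le _ _).trans (le_of_eq (sum_congr rfl fun j _ => ?_))
        rw [norm_mul, norm_mul, norm_star]
        ring
    _ ≤ ∑ i, ∑ j, ‖H i j‖ * ((‖x i‖ ^ 2 + ‖x j‖ ^ 2) / 2) := by
        gcongr with i _ j _
        nlinarith [two_mul_le_add_sq ‖x i‖ ‖x j‖]
    _ = (∑ i, ∑ j, ‖H i j‖ * ‖x i‖ ^ 2 + ∑ i, ∑ j, ‖H i j‖ * ‖x j‖ ^ 2) / 2 := by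
        simp only [← sum_add_distrib, sum_div]
        refine sum_congr rfl fun i _ => sum_congr rfl fun j _ => ?_
        ring
    _ ≤ (∑ i, c * ‖x i‖ ^ 2 + ∑ j, c * ‖x j‖ ^ 2) / 2 := by
        rw [sum_comm (f := fun i j => ‖H i j‖ * ‖x j‖ ^ 2)]
        simp only [← sum_mul]
        gcongr with i _ j _
        exacts [hrow i, hcol j]
    _ = c * ∑ i, ‖x i‖ ^ 2 := by rw [← mul_sum]; ring

theorem posSemidef_one_add_of_sum_norm_le [DecidableEq n] {H : Matrix n n ℂ}
    (hH : H.IsHermitian) (hrow : ∀ i, ∑ j, ‖H i j‖ ≤ 1) : (1 + H).PosSemidef := by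
  refine .of_dotProduct_mulVec_nonneg (isHermitian_one.add hH) fun x => ?_
  have him := (isHermitian_one.add hH).im_star_dotProduct_mulVec_self x
  rw [RCLike.im_to_complex] at him
  rw [Complex.nonneg_iff, him]
  refine ⟨?_, rfl⟩
  have hself : (star x ⬝ᵥ x).re = ∑ i, ‖x i‖ ^ 2 := by
    simp [dotProduct, Complex.mul_re, Complex.sq_norm, Complex.normSq_apply]
  have hform := hH.norm_star_dotProduct_mulVec_le hrow x
  rw [add_mulVec, one_mulVec, dotProduct_add, Complex.add_re, hself]
  linarith [neg_le_of_abs_le (Complex.abs_re_le_norm (star x ⬝ᵥ (H *ᵥ x)))]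

end Matrix

noncomputable def expI (p : ℤ) (θ : ℝ) : ℂ := cexp (p * θ * I)

lemma norm_expI (p : ℤ) (θ : ℝ) : ‖expI p θ‖ = 1 := by
  simp [expI, norm_exp]

lemma expI_add (p q : ℤ) (θ : ℝ) : expI (p + q) θ = expI p θ * expI q θ := by
  rw [expI, expI, expI, ← Complex.exp_add]
  push_cast
  ring_nf

lemma star_expI (p : ℤ) (θ : ℝ) : star (expI p θ) = expI (-p) θ := by
  rw [expI, expI, Complex.star_def, ← Complex.exp_conj]
  simp

@[fun_prop]
lemma continuous_expI (p : ℤ) : Continuous (expI p) := by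
  unfold expI
  fun_prop

lemma ofReal_mul_exp_pow (r θ : ℝ) (k : ℕ) :
    ((r : ℂ) * cexp (θ * I)) ^ k = r ^ k * expI k θ := by
  rw [mul_pow, expI, ← Complex.exp_nat_mul, mul_assoc, Int.cast_natCast]

lemma integral_expI (p : ℤ) :
    ∫ θ in (0 : ℝ)..2 * π, expI p θ = if p = 0 then (2 * π : ℂ) else 0 := by
  split_ifs with hp
  · simp [hp, expI]
  · have hpI : (p : ℂ) * I ≠ 0 := by simp [hp]
    simp_rw [expI, mul_right_comm _ _ I]
    rw [integral_exp_mul_complex hpI]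
    have : cexp (p * I * (2 * π)) = 1 := by
      rw [← Complex.exp_int_mul_two_pi_mul_I p]; ring_nf
    push_cast
    simp [this]

theorem integral_expI_mul_tsum {b : ℕ → ℂ} (hb : Summable fun m => ‖b m‖) (p : ℕ → ℤ) (k : ℤ) :
    ∫ θ in (0 : ℝ)..2 * π, expI k θ * ∑' m, b m * expI (p m) θ =
      2 * π * ∑' m, if k + p m = 0 then b m else 0 := by
  have hsum : HasSum (fun m => ∫ θ in (0 : ℝ)..2 * π, b m * expI (k + p m) θ)
      (∫ θ in (0 : ℝ)..2 * π, expI k θ * ∑' m, b m * expI (p m) θ) := by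
    refine intervalIntegral.hasSum_integral_of_dominated_convergence (fun m _ => ‖b m‖)
      (fun m => by fun_prop) (fun m => ae_of_all _ fun θ _ => by simp [norm_expI])
      (ae_of_all _ fun _ _ => hb) intervalIntegrable_const (ae_of_all _ fun θ _ => ?_)
    have hθ : Summable fun m => b m * expI (p m) θ :=
      hb.of_norm_bounded fun m => by simp [norm_expI]
    have hprod : (fun m => b m * expI (k + p m) θ) =
        fun m => expI k θ * (b m * expI (p m) θ) := by
      ext m
      rw [expI_add]
      ring
    exact hprod ▸ hθ.hasSum.mul_left (expI k θ)
  rw [← hsum.tsum_eq, ← tsum_mul_left]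
  congr 1 with m
  rw [intervalIntegral.integral_const_mul, integral_expI]
  split_ifs <;> ring

section CircleWeight

variable {n : Type*}

noncomputable def tailSeries (r : ℝ) (S : ℕ → Matrix n n ℂ) (θ : ℝ) : Matrix n n ℂ :=
  Matrix.of fun i j => ∑' m : ℕ, S (m + 1) i j / r ^ (m + 1) * expI (-(m + 1 : ℕ)) θ

noncomputable def circleWeight [DecidableEq n] (r : ℝ) (S : ℕ → Matrix n n ℂ) (θ : ℝ) :
    Matrix n n ℂ :=
  (2 * π)⁻¹ • (1 + (tailSeries r S θ + (tailSeries r S θ)ᴴ))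

structure IsTailMajorant (r : ℝ) (S : ℕ → Matrix n n ℂ) (b : ℕ → ℝ) : Prop where
  summable : Summable b
  norm_coeff_le : ∀ m i j, ‖S (m + 1) i j / r ^ (m + 1)‖ ≤ b m

variable {r : ℝ} {S : ℕ → Matrix n n ℂ} {b : ℕ → ℝ}

lemma IsTailMajorant.summable_norm_coeff (hS : IsTailMajorant r S b) (i j : n) :
    Summable fun m => ‖S (m + 1) i j / r ^ (m + 1)‖ :=
  hS.summable.of_nonneg_of_le (fun _ => norm_nonneg _) (hS.norm_coeff_le · i j)

lemma norm_tailSeries_apply_le (hS : IsTailMajorant r S b) (θ : ℝ) (i j : n) :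
    ‖tailSeries r S θ i j‖ ≤ ∑' m, b m :=
  tsum_of_norm_bounded hS.summable.hasSum fun m => by
    simpa [norm_expI] using hS.norm_coeff_le m i j

lemma continuous_tailSeries_apply (hS : IsTailMajorant r S b) (i j : n) :
    Continuous fun θ => tailSeries r S θ i j :=
  continuous_tsum (fun m => by fun_prop) hS.summable fun m θ => by
    simpa [norm_expI] using hS.norm_coeff_le m i j

lemma integral_expI_mul_tailSeries_apply (hS : IsTailMajorant r S b) (k : ℕ) (i j : n) :
    ∫ θ in (0 : ℝ)..2 * π, expI k θ * tailSeries r S θ i j =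
      if k = 0 then 0 else 2 * π * (S k i j / r ^ k) := by
  simp only [tailSeries, Matrix.of_apply]
  rw [integral_expI_mul_tsum (hS.summable_norm_coeff i j)]
  have hfreq : ∀ m : ℕ, (k : ℤ) + -((m + 1 : ℕ) : ℤ) = 0 ↔ m + 1 = k := by omega
  simp only [hfreq]
  rcases k with _ | k
  · simp
  · simp [tsum_ite_eq]

lemma integral_expI_mul_star_tailSeries_apply (hS : IsTailMajorant r S b) (k : ℕ) (i j : n) :
    ∫ θ in (0 : ℝ)..2 * π, expI k θ * star (tailSeries r S θ i j) = 0 := by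
  simp only [tailSeries, Matrix.of_apply, tsum_star, star_mul', star_expI, neg_neg]
  rw [integral_expI_mul_tsum (by simpa using hS.summable_norm_coeff i j)]
  have hfreq : ∀ m : ℕ, (k : ℤ) + ((m + 1 : ℕ) : ℤ) ≠ 0 := by omega
  simp only [hfreq, ↓reduceIte, tsum_zero, mul_zero]

lemma circleWeight_apply [DecidableEq n] (θ : ℝ) (i j : n) :
    circleWeight r S θ i j = ((2 * π)⁻¹ : ℝ) *
      ((1 : Matrix n n ℂ) i j + tailSeries r S θ i j + star (tailSeries r S θ j i)) := by
  simp only [circleWeight, Matrix.smul_apply, Matrix.add_apply, Matrix.conjTranspose_apply,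
    Complex.real_smul, add_assoc]

lemma continuous_circleWeight_apply [DecidableEq n] (hS : IsTailMajorant r S b) (i j : n) :
    Continuous fun θ => circleWeight r S θ i j := by
  have := continuous_tailSeries_apply hS i j
  have := continuous_tailSeries_apply hS j i
  simp_rw [circleWeight_apply]
  fun_prop

lemma norm_circleWeight_apply_le [DecidableEq n] (hS : IsTailMajorant r S b) (θ : ℝ) (i j : n) :
    ‖circleWeight r S θ i j‖ ≤ (2 * π)⁻¹ * (1 + 2 * ∑' m, b m) := by
  have hone : ‖(1 : Matrix n n ℂ) i j‖ ≤ 1 := by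
    rw [Matrix.one_apply]
    split_ifs <;> simp
  rw [circleWeight_apply, norm_mul, Complex.norm_real, Real.norm_of_nonneg (by positivity)]
  gcongr
  calc _ ≤ ‖(1 : Matrix n n ℂ) i j‖ + ‖tailSeries r S θ i j‖ + ‖star (tailSeries r S θ j i)‖ :=
        norm_add₃_le
    _ ≤ 1 + ∑' m, b m + ∑' m, b m := by
        rw [norm_star]
        gcongr
        exacts [norm_tailSeries_apply_le hS θ i j, norm_tailSeries_apply_le hS θ j i]
    _ = 1 + 2 * ∑' m, b m := by ring

lemma circleWeight_posSemidef [Fintype n] [DecidableEq n] (hS : IsTailMajorant r S b)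
    (hsmall : Fintype.card n * (2 * ∑' m, b m) ≤ 1) (θ : ℝ) :
    (circleWeight r S θ).PosSemidef := by
  set G := tailSeries r S θ
  have hentry : ∀ i j, ‖(G + Gᴴ) i j‖ ≤ 2 * ∑' m, b m := fun i j => by
    rw [Matrix.add_apply, Matrix.conjTranspose_apply, two_mul]
    refine (norm_add_le _ _).trans ?_
    rw [norm_star]
    gcongr
    exacts [norm_tailSeries_apply_le hS θ i j, norm_tailSeries_apply_le hS θ j i]
  refine (Matrix.posSemidef_one_add_of_sum_norm_le (Matrix.isHermitian_add_transpose_self G)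
    fun i => ?_).smul (by positivity : (0 : ℝ) ≤ (2 * π)⁻¹)
  calc ∑ j, ‖(G + Gᴴ) i j‖ ≤ ∑ _j : n, 2 * ∑' m, b m := sum_le_sum fun j _ => hentry i j
    _ = Fintype.card n * (2 * ∑' m, b m) := by simp
    _ ≤ 1 := hsmall

lemma integral_circleWeight_moment [DecidableEq n] (hS : IsTailMajorant r S b) (hS0 : S 0 = 1)
    (hr : r ≠ 0) (k : ℕ) (i j : n) :
    ∫ θ in (0 : ℝ)..2 * π, ((r : ℂ) * cexp (θ * I)) ^ k * circleWeight r S θ i j = S k i j := by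
  have hGij := continuous_tailSeries_apply hS i j
  have hGji := continuous_tailSeries_apply hS j i
  have hsplit : ∀ θ : ℝ, ((r : ℂ) * cexp (θ * I)) ^ k * circleWeight r S θ i j =
      (r ^ k * ((2 * π)⁻¹ : ℝ)) * ((1 : Matrix n n ℂ) i j * expI k θ +
        (expI k θ * tailSeries r S θ i j + expI k θ * star (tailSeries r S θ j i))) := by
    intro θ
    rw [ofReal_mul_exp_pow, circleWeight_apply]
    ring
  simp_rw [hsplit]
  rw [intervalIntegral.integral_const_mul, intervalIntegral.integral_add,
    intervalIntegral.integral_add, intervalIntegral.integral_const_mul, integral_expI,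
    integral_expI_mul_tailSeries_apply hS, integral_expI_mul_star_tailSeries_apply hS]
  · rcases k with _ | k
    · simp [hS0]
      field_simp
    · have hk : (k : ℤ) + 1 ≠ 0 := by omega
      simp [hk]
      field_simp
  all_goals exact Continuous.intervalIntegrable (by fun_prop) _ _

end CircleWeight

theorem exists_isTailMajorant_of_norm_le_geometric {n : Type*} [Fintype n] {S : ℕ → Matrix n n ℂ} {C R : ℝ}
    (hC : 0 ≤ C) (hR : 0 < R) (hbound : ∀ k, 1 ≤ k → ∀ i j, ‖S k i j‖ ≤ C * R ^ k) :
    ∃ r : ℝ, 0 < r ∧ ∃ b : ℕ → ℝ,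
      IsTailMajorant r S b ∧ Fintype.card n * (2 * ∑' m, b m) ≤ 1 := by
  set N : ℝ := (Fintype.card n : ℝ)
  set q : ℝ := (2 * N * C + 2)⁻¹ with hq
  have hNC : 0 ≤ N * C := by positivity
  have hq0 : 0 < q := by positivity
  have hq1 : q < 1 := inv_lt_one_of_one_lt₀ (by linarith)
  refine ⟨R / q, by positivity, fun m => C * q * q ^ m,
    ⟨(summable_geometric_of_lt_one hq0.le hq1).mul_left _, fun m i j => ?_⟩, ?_⟩
  · rw [norm_div, norm_pow, Complex.norm_real, Real.norm_of_nonneg (by positivity),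
      div_le_iff₀ (by positivity)]
    calc ‖S (m + 1) i j‖ ≤ C * R ^ (m + 1) := hbound _ (by omega) i j
      _ = C * q * q ^ m * (R / q) ^ (m + 1) := by
          rw [div_pow, pow_succ q]
          field_simp [hq0.ne']
  · have h1q : 1 - q = (2 * N * C + 1) * q := by
      rw [hq]
      field_simp
      ring
    calc N * (2 * ∑' m, C * q * q ^ m) = 2 * N * C / (2 * N * C + 1) := by
          rw [tsum_mul_left, tsum_geometric_of_lt_one hq0.le hq1, h1q]
          field_simp [hq0.ne']
      _ ≤ 1 := div_le_one_of_le₀ (by linarith) (by positivity)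

theorem matrix_moment_problem_solvable_general
    (N : ℕ) (S : ℕ → Matrix (Fin N) (Fin N) ℂ)
    (hS0 : S 0 = 1)
    (C R : ℝ) (hC : 0 < C) (hR : 0 < R)
    (hbound : ∀ k : ℕ, 1 ≤ k → ∀ l j : Fin N, ‖S k l j‖ ≤ C * R ^ k) :
    ∃ (r : ℝ) (W : ℝ → Matrix (Fin N) (Fin N) ℂ),
      0 < r ∧
      (∀ l j : Fin N, Measurable fun θ : ℝ => W θ l j) ∧
      (∃ B : ℝ, ∀ (θ : ℝ) (l j : Fin N), ‖W θ l j‖ ≤ B) ∧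
      (∀ θ : ℝ, (W θ).PosSemidef) ∧
      (∀ (k : ℕ) (l j : Fin N),
        ∫ θ in (0:ℝ)..(2 * Real.pi),
          ((r : ℂ) * Complex.exp ((θ : ℂ) * Complex.I)) ^ k * W θ l j = S k l j) := by
  obtain ⟨r, hr, b, hS, hsmall⟩ := exists_isTailMajorant_of_norm_le_geometric hC.le hR hbound
  exact ⟨r, circleWeight r S, hr,
    fun l j => (continuous_circleWeight_apply hS l j).measurable,
    ⟨_, norm_circleWeight_apply_le hS⟩,
    circleWeight_posSemidef hS hsmall,
    integral_circleWeight_moment hS hS0 hr.ne'⟩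

/-- **Solvability of the full matrix moment problem on a circle.**
If `S 0` is the identity and the entries of `S k` grow at most like `C * R ^ k`, then there
exist a radius `r > 0` and a bounded measurable Hermitian positive semidefinite matrix weight
`W` on `[0, 2π]` with `∫₀^{2π} (r e^{iθ})^k • W(θ) dθ = S k` entrywise, for all `k ≥ 0`. -/
theorem matrix_moment_problem_solvable
    (N : ℕ) (hN : 1 ≤ N) (S : ℕ → Matrix (Fin N) (Fin N) ℂ)
    (hS0 : S 0 = 1)
    (C R : ℝ) (hC : 0 < C) (hR : 0 < R)
    (hbound : ∀ k : ℕ, 1 ≤ k → ∀ l j : Fin N, ‖S k l j‖ ≤ C * R ^ k) :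
    ∃ (r : ℝ) (W : ℝ → Matrix (Fin N) (Fin N) ℂ),
      0 < r ∧
      (∀ l j : Fin N, Measurable fun θ : ℝ => W θ l j) ∧
      (∃ B : ℝ, ∀ (θ : ℝ) (l j : Fin N), ‖W θ l j‖ ≤ B) ∧
      (∀ θ : ℝ, (W θ).PosSemidef) ∧
      (∀ (k : ℕ) (l j : Fin N),
        ∫ θ in (0:ℝ)..(2 * Real.pi),
          ((r : ℂ) * Complex.exp ((θ : ℂ) * Complex.I)) ^ k * W θ l j = S k l j) :=
  matrix_moment_problem_solvable_general N S hS0 C R hC hR hbound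
end

section
/- Let N ≥ 1 and d ≥ 1 be integers, and let S_0 = E_N (the N×N identity matrix) and S_1, …, S_d ∈ ℂ^{N×N} be arbitrary complex matrices. Then there exist r > 0 and a measurable bounded function W : [0,2π] → ℂ^{N×N}, with W(θ) Hermitian positive semidefinite for every θ, such that ∫₀^{2π} (r e^{iθ})^k · W(θ) dθ = S_k for every k ∈ {0,1,…,d}. (In particular the truncated matrix moment problem ∫_ℂ z^k dM(z) = S_k, 0 ≤ k ≤ d, has a positive-matrix-valued solution supported on a circle centered at the origin.) -/
/-!
On the circle `|z| = r` take the weight `W = (1 + P + Pᴴ) / (2π)`, where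
`P(z) = ∑_{m=1}^d z⁻ᵐ S_m` is a principal part with the prescribed coefficients. Since
`∫₀^{2π} zᵖ dθ = 2π δ_{p,0}` for `z = r e^{iθ}`, the `k`-th moment of `W` picks out the coefficient
of `z⁻ᵏ`, which is `S_k` for `k ≥ 1` and `1 = S_0` for `k = 0`; the adjoint terms only contribute
positive powers of `z`. For `r` large, `‖P‖ ≤ 1/2` in operator norm, so `1 + P + Pᴴ ≥ 0`.
-/

open scoped ComplexOrder
open Complex ComplexConjugate Finset Matrix Real

/-- Via the circle integral `∮ z^(n-1) dz = I ∫ zⁿ dθ`, which vanishes for `n ≠ 0`. -/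
theorem integral_circleMap_zero_zpow {r : ℝ} (hr : r ≠ 0) (n : ℤ) :
    ∫ θ in (0 : ℝ)..2 * π, circleMap 0 r θ ^ n = if n = 0 then (2 * π : ℂ) else 0 := by
  split_ifs with hn
  · simp [hn]
  · have hcauchy := circleIntegral.integral_sub_zpow_of_ne (n := n - 1) (by omega) 0 0 r
    simp only [circleIntegral, deriv_circleMap, sub_zero, smul_eq_mul] at hcauchy
    have hintegrand (θ : ℝ) :
        circleMap 0 r θ * I * circleMap 0 r θ ^ (n - 1) = I * circleMap 0 r θ ^ n := by
      rw [zpow_sub_one₀ (circleMap_ne_center hr)]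
      field_simp [circleMap_ne_center hr]
    simpa only [hintegrand, intervalIntegral.integral_const_mul, mul_eq_zero, I_ne_zero,
      false_or] using hcauchy

theorem conj_inv_circleMap_zero (r θ : ℝ) :
    conj (circleMap 0 r θ)⁻¹ = circleMap 0 r θ / (r : ℂ) ^ 2 := by
  rw [Complex.inv_def, map_mul, conj_conj, conj_ofReal, div_eq_mul_inv, normSq_eq_norm_sq,
    norm_circleMap_zero, sq_abs]
  push_cast
  rfl

theorem Function.Periodic.exists_norm_le_of_continuous {E : Type*} [SeminormedAddCommGroup E]
    {f : ℝ → E} {c : ℝ} (hp : Periodic f c) (hc : c ≠ 0) (hf : Continuous f) :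
    ∃ B, ∀ x, ‖f x‖ ≤ B := by
  obtain ⟨B, hB⟩ := (hp.compact_of_continuous hc hf).isBounded.exists_norm_le
  exact ⟨B, fun x => hB _ (Set.mem_range_self x)⟩

theorem one_add_add_star_nonneg_of_norm_le_half {A : Type*} [CStarAlgebra A] [PartialOrder A]
    [StarOrderedRing A] {x : A} (hx : ‖x‖ ≤ 1 / 2) : 0 ≤ 1 + x + star x := by
  have hsa : IsSelfAdjoint (x + star x) := by
    simpa only [add_comm] using IsSelfAdjoint.star_add_self x
  have hnorm : ‖x + star x‖ ≤ 1 :=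
    calc ‖x + star x‖ ≤ ‖x‖ + ‖star x‖ := norm_add_le _ _
      _ ≤ 1 := by rw [norm_star]; linarith
  calc (0 : A) ≤ algebraMap ℝ A (1 - ‖x + star x‖) := algebraMap_nonneg A (by linarith)
    _ ≤ 1 + x + star x := by
        rw [map_sub, map_one, add_assoc, sub_eq_add_neg]
        exact add_le_add_right hsa.neg_algebraMap_norm_le_self 1

variable {n : Type*} [DecidableEq n]

noncomputable def principalPart (S : ℕ → Matrix n n ℂ) (d : ℕ) (z : ℂ) : Matrix n n ℂ :=
  ∑ m ∈ Icc 1 d, (z ^ m)⁻¹ • S m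

noncomputable def momentWeight (S : ℕ → Matrix n n ℂ) (d : ℕ) (z : ℂ) : Matrix n n ℂ :=
  (2 * π : ℝ)⁻¹ • (1 + principalPart S d z + (principalPart S d z)ᴴ)

theorem momentWeight_apply (S : ℕ → Matrix n n ℂ) (d : ℕ) (z : ℂ) (l j : n) :
    momentWeight S d z l j = ((2 * π : ℝ)⁻¹ : ℂ) * ((1 : Matrix n n ℂ) l j
      + ∑ m ∈ Icc 1 d, (z ^ m)⁻¹ * S m l j + ∑ m ∈ Icc 1 d, conj (z ^ m)⁻¹ * conj (S m j l)) := by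
  simp [momentWeight, principalPart, Matrix.sum_apply, mul_add]

theorem continuous_momentWeight_circleMap_apply (S : ℕ → Matrix n n ℂ) (d : ℕ) {r : ℝ}
    (hr : r ≠ 0) (l j : n) : Continuous fun θ => momentWeight S d (circleMap 0 r θ) l j := by
  simp only [momentWeight_apply]
  fun_prop (disch := exact fun θ => pow_ne_zero _ (circleMap_ne_center hr))

theorem circleMap_pow_mul_momentWeight_apply (S : ℕ → Matrix n n ℂ) (d : ℕ) {r : ℝ}
    (hr : r ≠ 0) (k : ℕ) (θ : ℝ) (l j : n) :
    circleMap 0 r θ ^ k * momentWeight S d (circleMap 0 r θ) l j =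
      ((2 * π : ℝ)⁻¹ : ℂ) * ((1 : Matrix n n ℂ) l j * circleMap 0 r θ ^ (k : ℤ)
        + ∑ m ∈ Icc 1 d, S m l j * circleMap 0 r θ ^ ((k : ℤ) - m)
        + ∑ m ∈ Icc 1 d, conj (S m j l) / (r : ℂ) ^ (2 * m) * circleMap 0 r θ ^ ((k : ℤ) + m)) := by
  have hz : circleMap 0 r θ ≠ 0 := circleMap_ne_center hr
  simp only [momentWeight_apply, ← inv_pow, map_pow, conj_inv_circleMap_zero, zpow_sub₀ hz,
    zpow_add₀ hz, zpow_natCast]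
  simp only [mul_add, mul_sum]
  ring_nf

theorem integral_circleMap_pow_mul_momentWeight_apply (S : ℕ → Matrix n n ℂ) {d k : ℕ}
    (hk : k ≤ d) {r : ℝ} (hr : r ≠ 0) (l j : n) :
    ∫ θ in (0 : ℝ)..2 * π, circleMap 0 r θ ^ k * momentWeight S d (circleMap 0 r θ) l j =
      (if k = 0 then 1 else S k) l j := by
  have hcont (c : ℂ) (p : ℤ) : Continuous fun θ => c * circleMap 0 r θ ^ p :=
    continuous_const.mul ((continuous_circleMap 0 r).zpow₀ p fun _ => .inl (circleMap_ne_center hr))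
  have hint (c : ℂ) (p : ℤ) := (hcont c p).intervalIntegrable (μ := MeasureTheory.volume) 0 (2 * π)
  have hsum (c : ℕ → ℂ) (p : ℕ → ℤ) := (continuous_finsetSum (Icc 1 d) fun m _ =>
    hcont (c m) (p m)).intervalIntegrable (μ := MeasureTheory.volume) 0 (2 * π)
  simp only [circleMap_pow_mul_momentWeight_apply S d hr]
  rw [intervalIntegral.integral_const_mul,
    intervalIntegral.integral_add ((hint _ _).add (hsum _ _)) (hsum _ _),
    intervalIntegral.integral_add (hint _ _) (hsum _ _),
    intervalIntegral.integral_finsetSum fun m _ => hint _ _,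
    intervalIntegral.integral_finsetSum fun m _ => hint _ _]
  simp only [intervalIntegral.integral_const_mul, integral_circleMap_zero_zpow hr]
  have hadjoint : ∀ m ∈ Icc 1 d, conj (S m j l) / (r : ℂ) ^ (2 * m) *
      (if (k : ℤ) + m = 0 then (2 * π : ℂ) else 0) = 0 := fun m hm => by
    rw [if_neg (by rw [mem_Icc] at hm; omega), mul_zero]
  rw [sum_eq_zero hadjoint]
  simp only [sub_eq_zero, Nat.cast_inj, Nat.cast_eq_zero, mul_ite, mul_zero, sum_ite_eq, mem_Icc]
  cases k with
  | zero => simp; field_simp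
  | succ k => simp [hk]; field_simp

section

open scoped Matrix.Norms.L2Operator MatrixOrder

variable [Fintype n]

theorem norm_principalPart_le (S : ℕ → Matrix n n ℂ) (d : ℕ) {z : ℂ} (hz : 1 ≤ ‖z‖) :
    ‖principalPart S d z‖ ≤ ‖z‖⁻¹ * ∑ m ∈ Icc 1 d, ‖S m‖ := by
  rw [principalPart, mul_sum]
  refine (norm_sum_le _ _).trans (sum_le_sum fun m hm => ?_)
  rw [norm_smul, norm_inv, norm_pow, ← inv_pow]
  gcongr
  exact pow_le_of_le_one (by positivity) (inv_le_one_of_one_le₀ hz) (by rw [mem_Icc] at hm; omega)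

theorem exists_posSemidef_momentWeight (S : ℕ → Matrix n n ℂ) (d : ℕ) :
    ∃ R, ∀ z : ℂ, R ≤ ‖z‖ → (momentWeight S d z).PosSemidef := by
  set s := ∑ m ∈ Icc 1 d, ‖S m‖
  have hs : 0 ≤ s := sum_nonneg fun m _ => norm_nonneg _
  refine ⟨1 + 2 * s, fun z hz => ?_⟩
  have hz0 : 0 < ‖z‖ := by linarith
  have hsmall : ‖principalPart S d z‖ ≤ 1 / 2 :=
    (norm_principalPart_le S d (by linarith)).trans <| by
      rw [inv_mul_le_iff₀ hz0]
      linarith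
  exact (nonneg_iff_posSemidef.mp (one_add_add_star_nonneg_of_norm_le_half hsmall)).smul
    (by positivity)

end

theorem truncated_matrix_moment_problem_solvable_general
    (N d : ℕ)
    (S : ℕ → Matrix (Fin N) (Fin N) ℂ) (hS0 : S 0 = 1) :
    ∃ (r : ℝ) (W : ℝ → Matrix (Fin N) (Fin N) ℂ),
      0 < r ∧
      (∀ l j : Fin N, Measurable fun θ : ℝ => W θ l j) ∧
      (∃ B : ℝ, ∀ (θ : ℝ) (l j : Fin N), ‖W θ l j‖ ≤ B) ∧
      (∀ θ : ℝ, (W θ).PosSemidef) ∧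
      (∀ k : ℕ, k ≤ d → ∀ l j : Fin N,
        ∫ θ in (0:ℝ)..(2 * Real.pi),
          ((r : ℂ) * Complex.exp ((θ : ℂ) * Complex.I)) ^ k * W θ l j = S k l j) := by
  obtain ⟨R, hR⟩ := exists_posSemidef_momentWeight S d
  set r := max R 1
  have hr : 0 < r := zero_lt_one.trans_le (le_max_right R 1)
  have hcont := continuous_momentWeight_circleMap_apply S d hr.ne'
  obtain ⟨B, hB⟩ := Function.Periodic.exists_norm_le_of_continuous
    ((periodic_circleMap 0 r).comp fun z (l j : Fin N) => momentWeight S d z l j)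
    two_pi_pos.ne' (continuous_pi fun l => continuous_pi fun j => hcont l j)
  refine ⟨r, fun θ => momentWeight S d (circleMap 0 r θ), hr, fun l j => (hcont l j).measurable,
    ⟨B, fun θ l j => ((norm_le_pi_norm _ j).trans (norm_le_pi_norm _ l)).trans (hB θ)⟩,
    fun θ => hR _ ?_, fun k hk l j => ?_⟩
  · rw [norm_circleMap_zero, abs_of_pos hr]
    exact le_max_left R 1
  · simp only [← circleMap_zero]
    rw [integral_circleMap_pow_mul_momentWeight_apply S hk hr.ne']
    split_ifs with hk0
    · rw [hk0, hS0]
    · rfl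

/-- **Solvability of the truncated matrix moment problem on a circle.**
If `S 0` is the identity and `S 1, …, S d` are arbitrary complex `N × N` matrices, then there
exist a radius `r > 0` and a bounded measurable Hermitian positive semidefinite matrix weight
`W` on `[0, 2π]` with `∫₀^{2π} (r e^{iθ})^k • W(θ) dθ = S k` entrywise, for all `0 ≤ k ≤ d`. -/
theorem truncated_matrix_moment_problem_solvable
    (N d : ℕ) (hN : 1 ≤ N) (hd : 1 ≤ d)
    (S : ℕ → Matrix (Fin N) (Fin N) ℂ) (hS0 : S 0 = 1) :
    ∃ (r : ℝ) (W : ℝ → Matrix (Fin N) (Fin N) ℂ),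
      0 < r ∧
      (∀ l j : Fin N, Measurable fun θ : ℝ => W θ l j) ∧
      (∃ B : ℝ, ∀ (θ : ℝ) (l j : Fin N), ‖W θ l j‖ ≤ B) ∧
      (∀ θ : ℝ, (W θ).PosSemidef) ∧
      (∀ k : ℕ, k ≤ d → ∀ l j : Fin N,
        ∫ θ in (0:ℝ)..(2 * Real.pi),
          ((r : ℂ) * Complex.exp ((θ : ℂ) * Complex.I)) ^ k * W θ l j = S k l j) :=
  truncated_matrix_moment_problem_solvable_general N d S hS0
end

section
/- Let N ≥ 1 and let g = (g_{m,n})_{m,n≥0} be complex numbers with: |g_{m,n}| ≤ C for some C > 0 and all m,n; g_{k,l} = 0 whenever |k−l| > N; g_{k,k+N} ≠ 0 for all k ≥ 0 and g_{l−N,l} ≠ 0 for all l ≥ N; and g_{m,n} = g_{n,m} for all m,n. Let p_n ∈ ℂ[λ] (n ≥ 0) satisfy λ^N p_n(λ) = Σ_{j≥0, |j−n|≤N} g_{n,j} p_j(λ) for all n ≥ 0, with p_j(λ) = λ^j for 0 ≤ j ≤ N−1; then deg p_n = n, so {p_n} is a basis of ℂ[λ], and there is a unique bilinear functional σ : ℂ[λ]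 × ℂ[λ] → ℂ (linear in both arguments) with σ(p_n, p_m) = δ_{n,m} for all n,m. Then there exists D > 0 such that |σ(λ^{kN+l}, λ^j)| ≤ D^k for all k ≥ 0 and all l, j ∈ {0, …, N−1}. -/
/-!
In coordinates with respect to `p`, multiplication by `λ^N` acts on finitely supported
coefficient vectors as right multiplication by the band matrix `g`: this is the recursion for
`p`. Since `λ^(kN+l) = λ^(Nk) p_l`, its coordinates form the `l`-th row of `g^k`, and pairing
with `λ^j = p_j` picks out the `j`-th entry of that row, because `σ(p_n, p_m) = δ_{n,m}`.
Every column of `g` has at most `2N+1` entries in the band, each of norm at most `C`, so the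
entries of `g^k` are bounded by `((2N+1)C)^k`.
-/

open Finset Polynomial

section BandVecMul

variable {R : Type*}

noncomputable def bandRow [Semiring R] (N : ℕ) (g : ℕ → ℕ → R) (j : ℕ) : ℕ →₀ R :=
  ∑ i ∈ Icc (j - N) (j + N), Finsupp.single i (g j i)

noncomputable def bandVecMul [Semiring R] (N : ℕ) (g : ℕ → ℕ → R) : Module.End R (ℕ →₀ R) :=
  Finsupp.linearCombination R (bandRow N g)

theorem bandVecMul_apply [Semiring R] (N : ℕ) (g : ℕ → ℕ → R) (c : ℕ →₀ R) (i : ℕ) :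
    bandVecMul N g c i = ∑ j ∈ Icc (i - N) (i + N), c j * g j i := by
  induction c using Finsupp.induction_linear with
  | zero => simp
  | add c d hc hd => simp [hc, hd, add_mul, sum_add_distrib]
  | single j a =>
    have hwin : i ∈ Icc (j - N) (j + N) ↔ j ∈ Icc (i - N) (i + N) := by
      simp only [mem_Icc]; omega
    simp [bandVecMul, bandRow, Finsupp.single_apply, hwin]

theorem norm_bandVecMul_apply_le [SeminormedRing R] {N : ℕ} {g : ℕ → ℕ → R} {C B : ℝ}
    (hg : ∀ m n, ‖g m n‖ ≤ C) {c : ℕ →₀ R} (hc : ∀ j, ‖c j‖ ≤ B) (i : ℕ) :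
    ‖bandVecMul N g c i‖ ≤ (2 * N + 1) * C * B := by
  have hC : 0 ≤ C := (norm_nonneg _).trans (hg 0 0)
  have hB : 0 ≤ B := (norm_nonneg _).trans (hc 0)
  have hcard : ((Icc (i - N) (i + N)).card : ℝ) ≤ 2 * N + 1 := by
    rw [Nat.card_Icc]; norm_cast; omega
  rw [bandVecMul_apply]
  calc ‖∑ j ∈ Icc (i - N) (i + N), c j * g j i‖
      ≤ ∑ j ∈ Icc (i - N) (i + N), ‖c j‖ * ‖g j i‖ :=
        norm_sum_le_of_le _ fun j _ => norm_mul_le _ _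
    _ ≤ ∑ j ∈ Icc (i - N) (i + N), B * C :=
        sum_le_sum fun j _ => mul_le_mul (hc j) (hg j i) (norm_nonneg _) hB
    _ ≤ (2 * N + 1) * C * B := by
        rw [sum_const, nsmul_eq_mul, mul_comm B, ← mul_assoc]; gcongr

theorem norm_bandVecMul_pow_apply_le [SeminormedRing R] {N : ℕ} {g : ℕ → ℕ → R} {C B : ℝ}
    (hg : ∀ m n, ‖g m n‖ ≤ C) {c : ℕ →₀ R} (hc : ∀ j, ‖c j‖ ≤ B) (k i : ℕ) :
    ‖(bandVecMul N g ^ k) c i‖ ≤ ((2 * N + 1) * C) ^ k * B := by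
  induction k generalizing i with
  | zero => simpa using hc i
  | succ k ih =>
    rw [pow_succ', Module.End.mul_apply, pow_succ', mul_assoc]
    exact norm_bandVecMul_apply_le hg ih i

end BandVecMul

section Coordinates

variable {R M : Type*} [CommSemiring R] [AddCommMonoid M] [Module R M] {p : ℕ → M}

theorem linearCombination_comp_bandVecMul {N : ℕ} {g : ℕ → ℕ → R} {T : Module.End R M}
    (hT : ∀ n, T (p n) = ∑ j ∈ Icc (n - N) (n + N), g n j • p j) :
    T ∘ₗ Finsupp.linearCombination R p = Finsupp.linearCombination R p ∘ₗ bandVecMul N g := by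
  ext n
  simp [bandVecMul, bandRow, hT, map_sum]

theorem bilin_linearCombination_apply_of_orthonormal {σ : M →ₗ[R] M →ₗ[R] R}
    (hσ : ∀ n m, σ (p n) (p m) = if n = m then 1 else 0) (c : ℕ →₀ R) (m : ℕ) :
    σ (Finsupp.linearCombination R p c) (p m) = c m := by
  induction c using Finsupp.induction_linear with
  | zero => simp
  | add c d hc hd => simp [hc, hd]
  | single n a => simp [hσ, Finsupp.single_apply]

end Coordinates

theorem spectral_function_moment_bound_general
    (N : ℕ) (g : ℕ → ℕ → ℂ) (C : ℝ)
    (hbd : ∀ m n : ℕ, ‖g m n‖ ≤ C)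
    (p : ℕ → Polynomial ℂ)
    (hrec : ∀ n : ℕ, Polynomial.X ^ N * p n =
      ∑ j ∈ Finset.Icc (n - N) (n + N), Polynomial.C (g n j) * p j)
    (hinit : ∀ j : ℕ, j < N → p j = Polynomial.X ^ j)
    (σ : Polynomial ℂ →ₗ[ℂ] Polynomial ℂ →ₗ[ℂ] ℂ)
    (hσ : ∀ n m : ℕ, σ (p n) (p m) = if n = m then 1 else 0) :
    ∃ D : ℝ, 0 < D ∧ ∀ (k l j : ℕ), l < N → j < N →
      ‖σ (Polynomial.X ^ (k * N + l)) (Polynomial.X ^ j)‖ ≤ D ^ k := by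
  have hC : 0 ≤ C := (norm_nonneg _).trans (hbd 0 0)
  refine ⟨(2 * N + 1) * C + 1, by positivity, fun k l j hl hj => ?_⟩
  have hT : ∀ n, LinearMap.mulLeft ℂ (X ^ N) (p n) = ∑ j ∈ Icc (n - N) (n + N), g n j • p j := by
    simpa [Polynomial.C_mul'] using hrec
  have hmoment : X ^ (k * N + l) =
      Finsupp.linearCombination ℂ p ((bandVecMul N g ^ k) (Finsupp.single l 1)) :=
    calc X ^ (k * N + l)
        = (LinearMap.mulLeft ℂ (X ^ N) ^ k)
            (Finsupp.linearCombination ℂ p (Finsupp.single l 1)) := by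
          rw [LinearMap.pow_mulLeft, LinearMap.mulLeft_apply, Finsupp.linearCombination_single,
            one_smul, hinit l hl, ← pow_mul, mul_comm N, pow_add]
      _ = _ := LinearMap.congr_fun (Module.End.commute_pow_left_of_commute
          (linearCombination_comp_bandVecMul hT) k) _
  have hsingle : ∀ i, ‖(Finsupp.single l (1 : ℂ)) i‖ ≤ 1 := fun i => by
    rw [Finsupp.single_apply]; split_ifs <;> simp
  rw [hmoment, ← hinit j hj, bilin_linearCombination_apply_of_orthonormal hσ]
  calc _ ≤ ((2 * N + 1) * C) ^ k * 1 := norm_bandVecMul_pow_apply_le hbd hsingle k j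
    _ ≤ ((2 * N + 1) * C + 1) ^ k := by rw [mul_one]; gcongr; linarith

/-- **Moment bound for the spectral function of a bounded complex symmetric banded matrix.**
If `σ` is the bilinear spectral functional determined by `σ(p_n, p_m) = δ_{n,m}` for the
polynomial solutions `p_n` of the difference equation associated to `g`, then the moments
`σ(λ^{kN+l}, λ^j)` (`0 ≤ l, j ≤ N-1`) are bounded by `D^k` for some `D > 0`. -/
theorem spectral_function_moment_bound
    (N : ℕ) (hN : 1 ≤ N) (g : ℕ → ℕ → ℂ) (C : ℝ) (hC : 0 < C)
    (hbd : ∀ m n : ℕ, ‖g m n‖ ≤ C)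
    (hband : ∀ k l : ℕ, N < ((k : ℤ) - (l : ℤ)).natAbs → g k l = 0)
    (hsup : ∀ k : ℕ, g k (k + N) ≠ 0)
    (hsub : ∀ l : ℕ, N ≤ l → g (l - N) l ≠ 0)
    (hsym : ∀ m n : ℕ, g m n = g n m)
    (p : ℕ → Polynomial ℂ)
    (hrec : ∀ n : ℕ, Polynomial.X ^ N * p n =
      ∑ j ∈ Finset.Icc (n - N) (n + N), Polynomial.C (g n j) * p j)
    (hinit : ∀ j : ℕ, j < N → p j = Polynomial.X ^ j)
    (σ : Polynomial ℂ →ₗ[ℂ] Polynomial ℂ →ₗ[ℂ] ℂ)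
    (hσ : ∀ n m : ℕ, σ (p n) (p m) = if n = m then 1 else 0) :
    ∃ D : ℝ, 0 < D ∧ ∀ (k l j : ℕ), l < N → j < N →
      ‖σ (Polynomial.X ^ (k * N + l)) (Polynomial.X ^ j)‖ ≤ D ^ k :=
  spectral_function_moment_bound_general N g C hbd p hrec hinit σ hσ
end

section
/- Let c ∈ ℂ and let p_n ∈ ℂ[z] (n ≥ 0) be defined by p_0 = 1, p_1 = z − c, and p_{n+1} = z·p_n − p_{n−1} for n ≥ 1. Then for every k ≥ 0: z^{2k} = (2k)! · Σ_{j=0}^{k} Σ_{m=0}^{2j} [(2j+1)/((k−j)!·(k+j+1)!)] · c^{2j−m} · p_m(z), and for every k ≥ 1: z^{2k−1} = (2k−1)! · Σ_{j=1}^{k} Σ_{m=0}^{2j−1} [2j/((k−j)!·(k+j)!)] · c^{2j−1−m} · p_m(z), as identities in ℂ[z]. -/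
/-!
The partial sums `q n = ∑ m ≤ n, c ^ (n - m) • p m` satisfy the unperturbed recurrence
`q (n + 2) = z q (n + 1) - q n` with `q 0 = 1`, `q 1 = z`, so they are the rescaled Chebyshev
polynomials `S n = U n (z / 2)`. Extended to all integer indices, `S` obeys
`z S m = S (m + 1) + S (m - 1)`, hence `z ^ n = ∑ i, (n choose i) S (n - 2 i)`, the expansion of
`(t + t⁻¹) ^ n`. The reflection `S (-m - 2) = -S m` folds the negative indices back, leaving the
ballot numbers `(n choose i) - (n choose (i + 1))`, which are the factorial coefficients.
-/

open Finset

namespace Polynomial.Chebyshev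

variable (R : Type*) [CommRing R]

theorem X_mul_S (m : ℤ) : X * S R m = S R (m + 1) + S R (m - 1) := by
  rw [S_add_one]; ring

theorem X_pow_eq_sum_choose_mul_S (n : ℕ) :
    (X : R[X]) ^ n = ∑ i ∈ range (n + 1), (n.choose i : R[X]) * S R (n - 2 * i) := by
  induction n with
  | zero => simp
  | succ n ih =>
    have split := sum_choose_succ_mul (fun i j => S R ((j : ℤ) - i)) n
    rw [sum_congr rfl fun i hi => by
      rw [show ((n + 1 - i : ℕ) : ℤ) - i = ((n + 1 : ℕ) : ℤ) - 2 * i by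
        have := mem_range.mp hi; omega]] at split
    rw [pow_succ', ih, mul_sum, split, ← sum_add_distrib]
    refine sum_congr rfl fun i hi => ?_
    have hin : i ≤ n := by simpa [Nat.lt_succ_iff] using hi
    rw [show ((n + 1 - i : ℕ) : ℤ) - i = n - 2 * i + 1 by omega,
      show ((n - i : ℕ) : ℤ) - (i + 1 : ℕ) = n - 2 * i - 1 by omega,
      mul_left_comm, X_mul_S, mul_add]

theorem X_pow_two_mul_eq_sum_choose_sub_mul_S (k : ℕ) :
    (X : R[X]) ^ (2 * k) = ∑ j ∈ range (k + 1),
      (((2 * k).choose (k + j) : R[X]) - (2 * k).choose (k + j + 1)) * S R (2 * j) := by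
  have low : ∑ i ∈ range (k + 1), ((2 * k).choose i : R[X]) * S R ((2 * k : ℕ) - 2 * i) =
      ∑ j ∈ range (k + 1), ((2 * k).choose (k + j) : R[X]) * S R (2 * j) := by
    rw [← sum_range_reflect]
    refine sum_congr rfl fun j hj => ?_
    have hjk : j ≤ k := by simpa [Nat.lt_succ_iff] using hj
    rw [Nat.choose_symm_of_eq_add (by omega : 2 * k = (k + 1 - 1 - j) + (k + j)),
      show ((2 * k : ℕ) : ℤ) - 2 * (k + 1 - 1 - j : ℕ) = 2 * j by omega]
  have high : ∑ l ∈ range k, ((2 * k).choose (k + 1 + l) : R[X]) *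
        S R ((2 * k : ℕ) - 2 * (k + 1 + l : ℕ)) =
      -∑ j ∈ range (k + 1), ((2 * k).choose (k + j + 1) : R[X]) * S R (2 * j) := by
    rw [sum_range_succ, Nat.choose_eq_zero_of_lt (by omega : 2 * k < k + k + 1), Nat.cast_zero,
      zero_mul, add_zero, ← sum_neg_distrib]
    refine sum_congr rfl fun l _ => ?_
    rw [show ((2 * k : ℕ) : ℤ) - 2 * (k + 1 + l : ℕ) = -(2 * l) - 2 by omega, S_neg_sub_two,
      add_right_comm]
    ring
  rw [X_pow_eq_sum_choose_mul_S, show 2 * k + 1 = (k + 1) + k by ring, sum_range_add, low, high,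
    ← sub_eq_add_neg, ← sum_sub_distrib]
  simp only [sub_mul]

theorem X_pow_two_mul_add_one_eq_sum_choose_sub_mul_S (k : ℕ) :
    (X : R[X]) ^ (2 * k + 1) = ∑ j ∈ range (k + 1),
      (((2 * k + 1).choose (k + j + 1) : R[X]) - (2 * k + 1).choose (k + j + 2)) *
        S R (2 * j + 1) := by
  have low : ∑ i ∈ range (k + 1),
        ((2 * k + 1).choose i : R[X]) * S R ((2 * k + 1 : ℕ) - 2 * i) =
      ∑ j ∈ range (k + 1), ((2 * k + 1).choose (k + j + 1) : R[X]) * S R (2 * j + 1) := by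
    rw [← sum_range_reflect]
    refine sum_congr rfl fun j hj => ?_
    have hjk : j ≤ k := by simpa [Nat.lt_succ_iff] using hj
    rw [Nat.choose_symm_of_eq_add (by omega : 2 * k + 1 = (k + 1 - 1 - j) + (k + j + 1)),
      show ((2 * k + 1 : ℕ) : ℤ) - 2 * (k + 1 - 1 - j : ℕ) = 2 * j + 1 by omega]
  have high : ∑ l ∈ range (k + 1), ((2 * k + 1).choose (k + 1 + l) : R[X]) *
        S R ((2 * k + 1 : ℕ) - 2 * (k + 1 + l : ℕ)) =
      -∑ j ∈ range (k + 1), ((2 * k + 1).choose (k + j + 2) : R[X]) * S R (2 * j + 1) := by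
    rw [sum_range_succ', show ((2 * k + 1 : ℕ) : ℤ) - 2 * (k + 1 + 0 : ℕ) = -1 by omega,
      S_neg_one, mul_zero, add_zero, sum_range_succ _ k,
      Nat.choose_eq_zero_of_lt (by omega : 2 * k + 1 < k + k + 2), Nat.cast_zero, zero_mul,
      add_zero, ← sum_neg_distrib]
    refine sum_congr rfl fun l _ => ?_
    rw [show ((2 * k + 1 : ℕ) : ℤ) - 2 * (k + 1 + (l + 1) : ℕ) = -(2 * l + 1) - 2 by omega,
      S_neg_sub_two, show k + 1 + (l + 1) = k + l + 2 by ring]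
    ring
  rw [X_pow_eq_sum_choose_mul_S, show 2 * k + 1 + 1 = (k + 1) + (k + 1) by ring, sum_range_add,
    low, high, ← sub_eq_add_neg, ← sum_sub_distrib]
  simp only [sub_mul]

end Polynomial.Chebyshev

namespace Nat

theorem cast_choose_sub_cast_choose_succ {K : Type*} [Field K] [CharZero K] (i t : ℕ) :
    ((i + t).choose i : K) - (i + t).choose (i + 1) =
      (i + t)! * ((i : K) + 1 - t) / ((i + 1)! * t !) := by
  have pascal := congrArg (Nat.cast : ℕ → K) (choose_succ_right_eq (i + t) i)
  have factorials := congrArg (Nat.cast : ℕ → K)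
    (choose_mul_factorial_mul_factorial (Nat.le_add_right i t))
  rw [Nat.add_sub_cancel_left] at pascal factorials
  push_cast at pascal factorials
  rw [eq_div_iff (by exact_mod_cast mul_ne_zero (factorial_ne_zero _) (factorial_ne_zero _)),
    ← factorials, factorial_succ]
  push_cast
  linear_combination -(i ! * t ! : K) * pascal

theorem cast_choose_two_mul_sub_cast_choose_succ {K : Type*} [Field K] [CharZero K]
    {k j : ℕ} (h : j ≤ k) :
    ((2 * k).choose (k + j) : K) - (2 * k).choose (k + j + 1) =
      (2 * k)! * ((2 * j + 1 : ℕ) / ((k - j)! * (k + j + 1)!)) := by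
  have ballot := cast_choose_sub_cast_choose_succ (K := K) (k + j) (k - j)
  rw [show k + j + (k - j) = 2 * k by omega, Nat.cast_sub h] at ballot
  rw [ballot]
  push_cast
  ring

theorem cast_choose_two_mul_add_one_sub_cast_choose_succ {K : Type*} [Field K] [CharZero K]
    {k j : ℕ} (h : j ≤ k) :
    ((2 * k + 1).choose (k + j + 1) : K) - (2 * k + 1).choose (k + j + 2) =
      (2 * k + 1)! * ((2 * (j + 1) : ℕ) / ((k - j)! * (k + j + 2)!)) := by
  have ballot := cast_choose_sub_cast_choose_succ (K := K) (k + j + 1) (k - j)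
  rw [show k + j + 1 + (k - j) = 2 * k + 1 by omega, Nat.cast_sub h] at ballot
  rw [ballot]
  push_cast
  ring

end Nat

open Polynomial

section ThreeTermRecurrence

variable {R : Type*} [CommRing R] {c : R} {p : ℕ → R[X]}

theorem eq_S_sub_C_mul_S_of_recurrence (hp0 : p 0 = 1) (hp1 : p 1 = X - C c)
    (hrec : ∀ n : ℕ, 1 ≤ n → p (n + 1) = X * p n - p (n - 1)) (n : ℕ) :
    p n = Chebyshev.S R n - C c * Chebyshev.S R (n - 1) := by
  induction n using Nat.twoStepInduction with
  | zero => simp [hp0]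
  | one => simp [hp1]
  | more n ih0 ih1 =>
    rw [hrec (n + 1) le_add_self, Nat.add_sub_cancel, ih0, ih1]
    push_cast
    have h1 := Chebyshev.S_add_two R n
    have h2 := Chebyshev.S_add_two R (n - 1)
    rw [show (n : ℤ) - 1 + 2 = n + 1 by ring, show (n : ℤ) - 1 + 1 = n by ring] at h2
    rw [show (n : ℤ) + 2 - 1 = n + 1 by ring, show (n : ℤ) + 1 - 1 = n by ring]
    linear_combination C c * h2 - h1

theorem sum_range_C_pow_mul_eq_S_of_recurrence (hp0 : p 0 = 1) (hp1 : p 1 = X - C c)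
    (hrec : ∀ n : ℕ, 1 ≤ n → p (n + 1) = X * p n - p (n - 1)) (n : ℕ) :
    ∑ m ∈ range (n + 1), C (c ^ (n - m)) * p m = Chebyshev.S R n := by
  induction n with
  | zero => simp [hp0]
  | succ n ih =>
    have shift : ∑ m ∈ range (n + 1), C (c ^ (n + 1 - m)) * p m =
        C c * ∑ m ∈ range (n + 1), C (c ^ (n - m)) * p m := by
      rw [mul_sum]
      refine sum_congr rfl fun m hm => ?_
      rw [Nat.sub_add_comm (by simpa [Nat.lt_succ_iff] using hm), pow_succ', C_mul, mul_assoc]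
    rw [sum_range_succ, shift, ih, Nat.sub_self, pow_zero, C_1, one_mul,
      eq_S_sub_C_mul_S_of_recurrence hp0 hp1 hrec]
    push_cast
    rw [add_sub_cancel_right]
    ring

theorem sum_range_C_mul_pow_mul_eq_C_mul_S_of_recurrence (hp0 : p 0 = 1) (hp1 : p 1 = X - C c)
    (hrec : ∀ n : ℕ, 1 ≤ n → p (n + 1) = X * p n - p (n - 1)) (a : R) (n : ℕ) :
    ∑ m ∈ range (n + 1), C (a * c ^ (n - m)) * p m = C a * Chebyshev.S R n := by
  simp_rw [C_mul, mul_assoc, ← mul_sum, sum_range_C_pow_mul_eq_S_of_recurrence hp0 hp1 hrec]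

end ThreeTermRecurrence

/-- **Expansion of monomials in the polynomial solutions for a complex rank-one perturbation
of the free Jacobi matrix** (identities in `ℂ[z]`):
`z^{2k} = (2k)! Σ_{j=0}^{k} Σ_{m=0}^{2j} (2j+1)/((k-j)!(k+j+1)!) · c^{2j-m} · p_m(z)` and,
for `k ≥ 1`,
`z^{2k-1} = (2k-1)! Σ_{j=1}^{k} Σ_{m=0}^{2j-1} 2j/((k-j)!(k+j)!) · c^{2j-1-m} · p_m(z)`. -/
theorem monomial_expansion_rank_one_perturbation
    (c : ℂ) (p : ℕ → Polynomial ℂ)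
    (hp0 : p 0 = 1) (hp1 : p 1 = Polynomial.X - Polynomial.C c)
    (hrec : ∀ n : ℕ, 1 ≤ n → p (n + 1) = Polynomial.X * p n - p (n - 1)) :
    (∀ k : ℕ, (Polynomial.X : Polynomial ℂ) ^ (2 * k) =
      Polynomial.C (((2 * k).factorial : ℂ)) *
        ∑ j ∈ Finset.range (k + 1), ∑ m ∈ Finset.range (2 * j + 1),
          Polynomial.C (((2 * j + 1 : ℕ) : ℂ) /
              (((k - j).factorial : ℂ) * (((k + j + 1).factorial : ℂ))) * c ^ (2 * j - m)) *
            p m) ∧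
    (∀ k : ℕ, 1 ≤ k → (Polynomial.X : Polynomial ℂ) ^ (2 * k - 1) =
      Polynomial.C (((2 * k - 1).factorial : ℂ)) *
        ∑ j ∈ Finset.Icc 1 k, ∑ m ∈ Finset.range (2 * j),
          Polynomial.C (((2 * j : ℕ) : ℂ) /
              (((k - j).factorial : ℂ) * (((k + j).factorial : ℂ))) * c ^ (2 * j - 1 - m)) *
            p m) := by
  have inner_sum := sum_range_C_mul_pow_mul_eq_C_mul_S_of_recurrence hp0 hp1 hrec
  constructor
  · intro k
    rw [Chebyshev.X_pow_two_mul_eq_sum_choose_sub_mul_S, mul_sum]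
    refine sum_congr rfl fun j hj => ?_
    rw [inner_sum, ← mul_assoc, ← C_mul, ← Nat.cast_choose_two_mul_sub_cast_choose_succ
      (Nat.lt_succ_iff.mp (mem_range.mp hj))]
    simp
  · intro k hk
    obtain ⟨k, rfl⟩ : ∃ k', k = k' + 1 := ⟨k - 1, by omega⟩
    rw [show 2 * (k + 1) - 1 = 2 * k + 1 by omega,
      Chebyshev.X_pow_two_mul_add_one_eq_sum_choose_sub_mul_S, ← Ico_add_one_right_eq_Icc,
      sum_Ico_eq_sum_range, Nat.add_sub_cancel, mul_sum]
    refine sum_congr rfl fun j hj => ?_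
    rw [add_comm 1 j, show 2 * (j + 1) - 1 = 2 * j + 1 by omega,
      show range (2 * (j + 1)) = range (2 * j + 1 + 1) from rfl, inner_sum,
      ← mul_assoc, ← C_mul, Nat.add_sub_add_right, show k + 1 + (j + 1) = k + j + 2 by ring,
      ← Nat.cast_choose_two_mul_add_one_sub_cast_choose_succ
        (Nat.lt_succ_iff.mp (mem_range.mp hj))]
    simp
end

section
/- Let c ∈ ℂ and let p_n ∈ ℂ[λ] (n ≥ 0) be defined by p_0 = 1, p_1 = λ − c, and p_{n+1} = λ·p_n − p_{n−1} for n ≥ 1. Let S : ℂ[λ] → ℂ be a linear functional satisfying S(p_n · p_m) = δ_{n,m} for all n, m ≥ 0. Then for every k ≥ 0: S(λ^{2k}) = (2k)! · Σ_{j=0}^{k} [(2j+1)/((k−j)!·(k+j+1)!)] · c^{2j}, and for every k ≥ 1: S(λ^{2k−1}) = (2k−1)! · Σ_{j=1}^{k} [2j/((k−j)!·(k+j)!)] · c^{2j−1}. -/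
/-!
Since `X p₀ = p₁ + c p₀` and `X pₘ₊₁ = pₘ₊₂ + pₘ`, while `S pₘ = δₘ₀` (the case `n = 0` of the
orthogonality relations), the numbers `S (Xⁿ pₘ)` satisfy the recursion of walks on `ℕ` with steps
`±1`, perturbed by `c` at height `0`. Its solution is `S (Xⁿ pₘ) = ∑ⱼ cʲ ballot n (m + j)`, and the
ballot formula `ballot (M + 2t) M = (M + 1) (M + 2t)! / (t! (M + t + 1)!)` (with `ballot n M = 0`
for `n + M` odd) turns `S (Xⁿ) = ∑ⱼ cʲ ballot n j` into the two moment formulas.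
-/

open Polynomial Finset Nat

/-- The number of walks of length `n` on `ℕ` with steps `±1` from `M` to `0`. -/
def ballot : ℕ → ℕ → ℕ
  | 0, M => if M = 0 then 1 else 0
  | n + 1, 0 => ballot n 1
  | n + 1, M + 1 => ballot n (M + 2) + ballot n M

lemma ballot_eq_zero_of_odd {n M : ℕ} (h : Odd (n + M)) : ballot n M = 0 := by
  rw [Nat.odd_iff] at h
  induction n generalizing M with
  | zero => simp [ballot]; omega
  | succ n ih =>
    cases M with
    | zero => exact ih (by omega)
    | succ M => rw [ballot, ih (by omega), ih (by omega)]

lemma ballot_eq_zero_of_lt : ∀ {n M : ℕ}, n < M → ballot n M = 0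
  | 0, M, h => by simp [ballot]; omega
  | n + 1, M + 1, h => by
    rw [ballot, ballot_eq_zero_of_lt (by omega), ballot_eq_zero_of_lt (by omega)]

lemma ballot_self : ∀ n, ballot n n = 1
  | 0 => rfl
  | n + 1 => by rw [ballot, ballot_eq_zero_of_lt (by omega), ballot_self n]

lemma ballot_add_two_mul_mul_factorial :
    ∀ t M, ballot (M + 2 * t) M * (t ! * (M + t + 1)!) = (M + 1) * (M + 2 * t)!
  | 0, M => by simp [ballot_self, factorial_succ]
  | t + 1, 0 => by
    have h := ballot_add_two_mul_mul_factorial t 1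
    rw [show 1 + t + 1 = 0 + (t + 1) + 1 by ring] at h
    rw [show 0 + 2 * (t + 1) = 1 + 2 * t + 1 by ring, ballot, factorial_succ t,
      factorial_succ (1 + 2 * t)]
    linear_combination (t + 1) * h
  | t + 1, M + 1 => by
    have h₁ := ballot_add_two_mul_mul_factorial t (M + 2)
    have h₂ := ballot_add_two_mul_mul_factorial (t + 1) M
    rw [show M + 2 + 2 * t = M + 2 * (t + 1) by ring, show M + 2 + t + 1 = M + t + 2 + 1 by ring,
      factorial_succ (M + t + 2)] at h₁
    rw [show M + (t + 1) + 1 = M + t + 2 by ring, factorial_succ t] at h₂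
    rw [show M + 1 + 2 * (t + 1) = M + 2 * (t + 1) + 1 by ring,
      show M + 1 + (t + 1) + 1 = M + t + 2 + 1 by ring, ballot, factorial_succ t,
      factorial_succ (M + t + 2), factorial_succ (M + 2 * (t + 1))]
    linear_combination (t + 1) * h₁ + (M + t + 3) * h₂

lemma ballot_add_two_mul_eq {K : Type*} [Field K] [CharZero K] (t M : ℕ) :
    (ballot (M + 2 * t) M : K) = (M + 1) * (M + 2 * t)! / (t ! * (M + t + 1)!) := by
  rw [eq_div_iff (by simp [factorial_ne_zero])]
  exact_mod_cast ballot_add_two_mul_mul_factorial t M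

lemma eq_sum_ballot_of_recurrence {R : Type*} [CommSemiring R] {c : R} {f : ℕ → ℕ → R}
    (h0 : ∀ m, f 0 m = if m = 0 then 1 else 0)
    (hzero : ∀ n, f (n + 1) 0 = f n 1 + c * f n 0)
    (hsucc : ∀ n m, f (n + 1) (m + 1) = f n (m + 2) + f n m)
    {n N : ℕ} (hN : n < N) (m : ℕ) : f n m = ∑ j ∈ range N, c ^ j * ballot n (m + j) := by
  induction n generalizing N m with
  | zero =>
    obtain ⟨N, rfl⟩ := Nat.exists_eq_add_of_lt hN
    simp [h0, ballot, sum_range_succ']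
  | succ n ih =>
    obtain ⟨N, rfl⟩ : ∃ N', N = N' + 1 := Nat.exists_eq_add_one.mpr (by omega)
    cases m with
    | zero =>
      rw [hzero, ih (N := N + 1) (by omega) 1, ih (N := N) (by omega) 0, mul_sum,
        sum_range_succ', sum_range_succ' _ N, add_right_comm, ← sum_add_distrib]
      congr 1
      refine sum_congr rfl fun j _ => ?_
      rw [zero_add, zero_add, ballot, show 1 + (j + 1) = j + 2 by omega]
      push_cast
      ring
    | succ m =>
      rw [hsucc, ih (N := N + 1) (by omega), ih (N := N + 1) (by omega), ← sum_add_distrib]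
      refine sum_congr rfl fun j _ => ?_
      rw [show m + 1 + j = m + j + 1 by omega, ballot, show m + 2 + j = m + j + 2 by omega]
      push_cast
      ring

lemma map_X_pow_eq_sum_ballot {R : Type*} [CommRing R] {c : R} {p : ℕ → R[X]}
    (hp0 : p 0 = 1) (hp1 : p 1 = X - C c)
    (hrec : ∀ n, 1 ≤ n → p (n + 1) = X * p n - p (n - 1))
    (S : R[X] →ₗ[R] R) (hS : ∀ m, S (p m) = if m = 0 then 1 else 0) (n : ℕ) :
    S (X ^ n) = ∑ j ∈ range (n + 1), c ^ j * ballot n j := by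
  have hX₀ : X * p 0 = p 1 + C c * p 0 := by rw [hp0, hp1]; ring
  have hX : ∀ m, X * p (m + 1) = p (m + 2) + p m := fun m => by
    rw [hrec (m + 1) le_add_self, add_tsub_cancel_right]; ring
  have h := eq_sum_ballot_of_recurrence (c := c) (f := fun n m => S (X ^ n * p m))
    (by simpa using hS)
    (fun n => by rw [pow_succ, mul_assoc, hX₀, mul_add, map_add, mul_left_comm, C_mul',
      map_smul, smul_eq_mul])
    (fun n m => by rw [pow_succ, mul_assoc, hX, mul_add, map_add])
    n.lt_succ_self 0
  simpa [hp0] using h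

section parity

variable {M : Type*} [AddCommMonoid M] (f : ℕ → M)

lemma sum_range_two_mul_add_one_eq_of_odd (hf : ∀ j, Odd j → f j = 0) :
    ∀ k, ∑ j ∈ range (2 * k + 1), f j = ∑ i ∈ range (k + 1), f (2 * i)
  | 0 => by simp
  | k + 1 => by
    rw [sum_range_succ _ (k + 1), ← sum_range_two_mul_add_one_eq_of_odd hf k,
      show 2 * (k + 1) + 1 = 2 * k + 1 + 1 + 1 by ring, sum_range_succ, sum_range_succ,
      hf _ (odd_two_mul_add_one k), add_zero, show 2 * k + 1 + 1 = 2 * (k + 1) by ring]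

lemma sum_range_two_mul_eq_of_even (hf : ∀ j, Even j → f j = 0) :
    ∀ k, ∑ j ∈ range (2 * k), f j = ∑ i ∈ Icc 1 k, f (2 * i - 1)
  | 0 => by simp
  | k + 1 => by
    rw [sum_Icc_succ_top (by omega), ← sum_range_two_mul_eq_of_even hf k,
      show 2 * (k + 1) = 2 * k + 1 + 1 by ring, sum_range_succ, sum_range_succ,
      hf _ (even_two_mul k), add_zero, add_tsub_cancel_right]

end parity

section moments

variable {K : Type*} [Field K] [CharZero K] (c : K) (k : ℕ)

lemma sum_ballot_two_mul :
    ∑ j ∈ range (2 * k + 1), c ^ j * ballot (2 * k) j =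
      ((2 * k)! : K) * ∑ j ∈ range (k + 1),
        ((2 * j + 1 : ℕ) : K) / (((k - j)! : K) * ((k + j + 1)! : K)) * c ^ (2 * j) := by
  rw [sum_range_two_mul_add_one_eq_of_odd _ (fun j hj => by
    rw [ballot_eq_zero_of_odd ((even_two_mul k).add_odd hj), cast_zero, mul_zero]), mul_sum]
  refine sum_congr rfl fun i hi => ?_
  obtain ⟨t, rfl⟩ := Nat.exists_eq_add_of_le (mem_range_succ_iff.mp hi)
  rw [show 2 * (i + t) = 2 * i + 2 * t by ring, ballot_add_two_mul_eq, add_tsub_cancel_left,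
    show 2 * i + t + 1 = i + t + i + 1 by ring]
  push_cast
  ring

lemma sum_ballot_two_mul_sub_one (hk : 1 ≤ k) :
    ∑ j ∈ range (2 * k), c ^ j * ballot (2 * k - 1) j =
      ((2 * k - 1)! : K) * ∑ j ∈ Icc 1 k,
        ((2 * j : ℕ) : K) / (((k - j)! : K) * ((k + j)! : K)) * c ^ (2 * j - 1) := by
  rw [sum_range_two_mul_eq_of_even _ (fun j hj => by
    rw [ballot_eq_zero_of_odd (by rw [Nat.odd_iff]; rw [Nat.even_iff] at hj; omega), cast_zero, mul_zero]) k, mul_sum]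
  refine sum_congr rfl fun i hi => ?_
  obtain ⟨hi, hik⟩ := mem_Icc.mp hi
  obtain ⟨s, rfl⟩ := Nat.exists_eq_add_of_le' hi
  obtain ⟨t, rfl⟩ := Nat.exists_eq_add_of_le hik
  rw [show 2 * (s + 1 + t) - 1 = 2 * s + 1 + 2 * t by omega,
    show 2 * (s + 1) - 1 = 2 * s + 1 by omega, ballot_add_two_mul_eq, add_tsub_cancel_left,
    show s + 1 + t + (s + 1) = 2 * s + 1 + t + 1 by ring]
  push_cast
  ring

end moments

/-- **Moments of the spectral functional of a complex rank-one perturbation of the free Jacobi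
matrix:** if `S` is a linear functional with `S(p_n p_m) = δ_{n,m}`, then
`S(λ^{2k}) = (2k)! Σ_{j=0}^{k} (2j+1)/((k-j)!(k+j+1)!) · c^{2j}` and, for `k ≥ 1`,
`S(λ^{2k-1}) = (2k-1)! Σ_{j=1}^{k} 2j/((k-j)!(k+j)!) · c^{2j-1}`. -/
theorem spectral_functional_moments_rank_one_perturbation
    (c : ℂ) (p : ℕ → Polynomial ℂ)
    (hp0 : p 0 = 1) (hp1 : p 1 = Polynomial.X - Polynomial.C c)
    (hrec : ∀ n : ℕ, 1 ≤ n → p (n + 1) = Polynomial.X * p n - p (n - 1))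
    (S : Polynomial ℂ →ₗ[ℂ] ℂ)
    (hS : ∀ n m : ℕ, S (p n * p m) = if n = m then 1 else 0) :
    (∀ k : ℕ, S ((Polynomial.X : Polynomial ℂ) ^ (2 * k)) =
      (((2 * k).factorial : ℂ)) *
        ∑ j ∈ Finset.range (k + 1),
          ((2 * j + 1 : ℕ) : ℂ) /
              (((k - j).factorial : ℂ) * (((k + j + 1).factorial : ℂ))) * c ^ (2 * j)) ∧
    (∀ k : ℕ, 1 ≤ k → S ((Polynomial.X : Polynomial ℂ) ^ (2 * k - 1)) =
      (((2 * k - 1).factorial : ℂ)) *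
        ∑ j ∈ Finset.Icc 1 k,
          ((2 * j : ℕ) : ℂ) /
              (((k - j).factorial : ℂ) * (((k + j).factorial : ℂ))) * c ^ (2 * j - 1)) := by
  have hmom := map_X_pow_eq_sum_ballot hp0 hp1 hrec S
    (fun m => by simpa [hp0, eq_comm] using hS 0 m)
  refine ⟨fun k => by rw [hmom, sum_ballot_two_mul], fun k hk => ?_⟩
  rw [hmom, Nat.sub_add_cancel (by omega), sum_ballot_two_mul_sub_one c k hk]
end

section
/- (Factorial estimate.) For all integers n ≥ 1 and m ≥ 0: (2m+n−1)!/(m!·(m+n)!) ≤ 2^n · 4^m / n; equivalently n·(2m+n−1)! ≤ 2^n · 4^m · m! · (m+n)!. -/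
open Nat

/- Since `(a+b)! = C(a+b, a) a! b!` and `C(a+b, a) ≤ 2^(a+b)`, taking `a = m`, `b = m + n - 1` gives
`(2m+n-1)! ≤ 2^(2m+n-1) m! (m+n-1)!`; multiplying by `n ≤ m + n` turns `(m+n-1)!` into `(m+n)!`. -/

theorem factorial_add_le_two_pow_mul (a b : ℕ) : (a + b)! ≤ 2 ^ (a + b) * a ! * b ! := by
  rw [← add_choose_mul_factorial_mul_factorial]
  gcongr
  exact choose_le_two_pow _ _

theorem succ_mul_factorial_le (k m : ℕ) :
    (k + 1) * (m + (m + k))! ≤ 2 ^ (k + 1) * 4 ^ m * m ! * (m + k + 1)! := by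
  have hpow : 2 ^ (m + (m + k)) ≤ 2 ^ (k + 1) * 4 ^ m := by
    rw [show 4 = 2 ^ 2 by rfl, ← pow_mul, ← pow_add]
    exact Nat.pow_le_pow_right two_pos (by omega)
  calc (k + 1) * (m + (m + k))!
      ≤ (m + k + 1) * (2 ^ (m + (m + k)) * m ! * (m + k)!) := by
        gcongr
        · omega
        · exact factorial_add_le_two_pow_mul _ _
    _ = 2 ^ (m + (m + k)) * m ! * (m + k + 1)! := by rw [factorial_succ]; ring
    _ ≤ 2 ^ (k + 1) * 4 ^ m * m ! * (m + k + 1)! := by gcongr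

/-- **Factorial estimate:** for `n ≥ 1` and `m ≥ 0`,
`(2m+n-1)!/(m!(m+n)!) ≤ 2^n · 4^m / n`; equivalently,
`n·(2m+n-1)! ≤ 2^n · 4^m · m! · (m+n)!`. -/
theorem factorial_estimate (n m : ℕ) (hn : 1 ≤ n) :
    (((2 * m + n - 1).factorial : ℚ) / ((m.factorial : ℚ) * ((m + n).factorial : ℚ)) ≤
      2 ^ n * 4 ^ m / n) ∧
    (n * (2 * m + n - 1).factorial ≤ 2 ^ n * 4 ^ m * m.factorial * (m + n).factorial) := by
  obtain ⟨k, rfl⟩ : ∃ k, n = k + 1 := ⟨n - 1, by omega⟩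
  have hnat : (k + 1) * (2 * m + (k + 1) - 1)! ≤ 2 ^ (k + 1) * 4 ^ m * m ! * (m + (k + 1))! := by
    rw [show 2 * m + (k + 1) - 1 = m + (m + k) by omega]
    exact succ_mul_factorial_le k m
  refine ⟨?_, hnat⟩
  rw [div_le_div_iff₀ (by positivity) (by positivity), mul_comm, ← mul_assoc]
  exact_mod_cast hnat
end

section
/- Let c ∈ ℂ, R₀ := max(2, 2|c|), and define w(z) := Σ_{n=1}^{∞} n·c^{n−1}·z^{−n}·φ_n(z) for |z| > R₀, where φ_n(z) := Σ_{m=0}^{∞} [(2m+n−1)!/(m!·(m+n)!)] · z^{−2m}. Define s_0 := 1, s_{2k} := (2k)!·Σ_{j=0}^{k} [(2j+1)/((k−j)!·(k+j+1)!)]·c^{2j} for k ≥ 1, and s_{2k−1} := (2k−1)!·Σ_{j=1}^{k} [2j/((k−j)!·(k+j)!)]·c^{2j−1} for k ≥ 1. Then for every R > R₀ and every integer d: (1/(2πi)) ∮_{|z|=R} z^d · w(z) dz equals s_d if d ≥ 0, and equals 0 if d ≤ −1. Equivalently, w has the Laurent expansion w(z) = Σ_{k=0}^{∞} s_k · z^{−k−1}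 on |z| > R₀. -/
/-!
Expanding `φ_n`, `w(z)` is the double series
`Σ_{n,m} (n+1) (2m+n)!/(m!(m+n+1)!) c^n z^{-(n+2m+1)}`. Since `(2m+n)! ≤ 2^{2m+n} m!(m+n)!`, it is
dominated by `|z|⁻¹ Σ_{n,m} (n+1) (2|c|/|z|)^n (4/|z|²)^m`, which converges for
`|z| > max(2, 2|c|)`. Absolute convergence lets us collect the terms with `n + 2m = k`; after
reversing the order of summation this gives the coefficient `s_k` of `z^{-(k+1)}`. On the circle
`|z| = R` the Laurent series is dominated by a summable sequence of constants, so it can be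
integrated termwise against `z^d`, and only `∮ z⁻¹ dz = 2πi` survives.
-/

/-- The auxiliary function `φ_n(z) = Σ_{m=0}^∞ (2m+n-1)!/(m!(m+n)!) · z^{-2m}` (for `|z| > 2`). -/
noncomputable def phiFun (n : ℕ) (z : ℂ) : ℂ :=
  ∑' m : ℕ, ((2 * m + n - 1).factorial : ℂ) /
    ((m.factorial : ℂ) * ((m + n).factorial : ℂ)) * (z ^ (2 * m))⁻¹

/-- The complex weight `w(z) = Σ_{n=1}^∞ n·c^{n-1}·z^{-n}·φ_n(z)` (for `|z| > max(2, 2|c|)`),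
written here with the summation index shifted to start at `0`. -/
noncomputable def wFun (c : ℂ) (z : ℂ) : ℂ :=
  ∑' n : ℕ, ((n + 1 : ℕ) : ℂ) * c ^ n * (z ^ (n + 1))⁻¹ * phiFun (n + 1) z

/-- The moment sequence: `s_0 = 1`,
`s_{2k} = (2k)! Σ_{j=0}^{k} (2j+1)/((k-j)!(k+j+1)!) c^{2j}` and
`s_{2k-1} = (2k-1)! Σ_{j=1}^{k} 2j/((k-j)!(k+j)!) c^{2j-1}`. -/
noncomputable def sMom (c : ℂ) (k : ℕ) : ℂ :=
  if Even k then
    ((k.factorial : ℂ)) * ∑ j ∈ Finset.range (k / 2 + 1),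
      ((2 * j + 1 : ℕ) : ℂ) /
        (((k / 2 - j).factorial : ℂ) * ((k / 2 + j + 1).factorial : ℂ)) * c ^ (2 * j)
  else
    ((k.factorial : ℂ)) * ∑ j ∈ Finset.Icc 1 ((k + 1) / 2),
      ((2 * j : ℕ) : ℂ) /
        ((((k + 1) / 2 - j).factorial : ℂ) * (((k + 1) / 2 + j).factorial : ℂ)) * c ^ (2 * j - 1)

open Complex Finset Metric

theorem HasSum.regroup_add_two_mul {E : Type*} [AddCommMonoid E] [TopologicalSpace E]
    [ContinuousAdd E] [RegularSpace E] {f : ℕ × ℕ → E} {a : E} (hf : HasSum f a) :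
    HasSum (fun k => ∑ m ∈ range (k / 2 + 1), f (k - 2 * m, m)) a := by
  let g : ℕ × ℕ → E := fun p => if 2 * p.2 ≤ p.1 then f (p.1 - 2 * p.2, p.2) else 0
  let ι : ℕ × ℕ → ℕ × ℕ := fun p => (p.1 + 2 * p.2, p.2)
  have hι : Function.Injective ι := fun p q h => by
    simp only [ι, Prod.mk.injEq] at h
    exact Prod.ext (by omega) h.2
  have hgι : g ∘ ι = f := funext fun p => by simp [g, ι]
  have hg : HasSum g a := by
    refine (hι.hasSum_iff fun p hp => if_neg fun h => hp ⟨(p.1 - 2 * p.2, p.2), ?_⟩).mp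
      (by rwa [hgι])
    exact Prod.ext (by simp only [ι]; omega) rfl
  refine hg.prod_fiberwise fun k => ?_
  rw [sum_congr rfl fun m hm =>
    (if_pos (by simp only [mem_range] at hm; omega) : g (k, m) = _).symm]
  exact hasSum_sum_of_ne_finset_zero fun m hm => if_neg (by simp only [mem_range] at hm; omega)

theorem sMom_eq_sum_range (c : ℂ) (k : ℕ) :
    sMom c k = ∑ m ∈ range (k / 2 + 1),
      ((k - 2 * m + 1 : ℕ) : ℂ) * c ^ (k - 2 * m) *
        ((k.factorial : ℂ) / ((m.factorial : ℂ) * ((k - m + 1).factorial : ℂ))) := by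
  rcases Nat.even_or_odd' k with ⟨K, rfl | rfl⟩
  · rw [sMom, if_pos (even_two_mul K), show 2 * K / 2 = K by omega, mul_sum]
    refine sum_nbij' (fun j => K - j) (fun m => K - m) ?_ ?_ ?_ ?_ fun j hj => ?_
    iterate 4 (intro j hj; simp only [mem_range] at hj ⊢; omega)
    simp only [mem_range] at hj
    rw [show 2 * K - 2 * (K - j) + 1 = 2 * j + 1 by omega,
      show 2 * K - 2 * (K - j) = 2 * j by omega, show 2 * K - (K - j) + 1 = K + j + 1 by omega]
    ring
  · rw [sMom, if_neg (Nat.not_even_iff_odd.mpr (odd_two_mul_add_one K)),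
      show (2 * K + 1 + 1) / 2 = K + 1 by omega, show (2 * K + 1) / 2 = K by omega, mul_sum]
    refine sum_nbij' (fun j => K + 1 - j) (fun m => K + 1 - m) ?_ ?_ ?_ ?_ fun j hj => ?_
    iterate 4 (intro j hj; simp only [mem_range, mem_Icc] at hj ⊢; omega)
    simp only [mem_Icc] at hj
    rw [show 2 * K + 1 - 2 * (K + 1 - j) + 1 = 2 * j by omega,
      show 2 * K + 1 - 2 * (K + 1 - j) = 2 * j - 1 by omega,
      show 2 * K + 1 - (K + 1 - j) + 1 = K + 1 + j by omega]
    ring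

theorem Nat.factorial_add_le (i j : ℕ) :
    (i + j).factorial ≤ 2 ^ (i + j) * (i.factorial * j.factorial) := by
  rw [← Nat.add_choose_mul_factorial_mul_factorial i j, mul_assoc]
  exact Nat.mul_le_mul_right _ (Nat.choose_le_two_pow _ _)

theorem factorial_div_factorial_mul_factorial_le (n m : ℕ) :
    ((2 * m + n).factorial : ℝ) / ((m.factorial : ℝ) * ((m + n + 1).factorial : ℝ)) ≤
      2 ^ n * 4 ^ m := by
  rw [div_le_iff₀ (by positivity), show (4 : ℝ) ^ m = 2 ^ (2 * m) by rw [pow_mul]; norm_num,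
    ← pow_add, add_comm n]
  have h := Nat.factorial_add_le (m + n) m
  rw [show m + n + m = 2 * m + n by ring] at h
  calc ((2 * m + n).factorial : ℝ) ≤ 2 ^ (2 * m + n) * ((m + n).factorial * m.factorial) := by
        exact_mod_cast h
    _ ≤ 2 ^ (2 * m + n) * (m.factorial * (m + n + 1).factorial) := by
        rw [mul_comm ((m + n).factorial : ℝ)]
        gcongr _ * (_ * ?_)
        exact_mod_cast Nat.factorial_le (by omega)

-- The `(n, m)` term of `wFun` after unfolding `phiFun`, verbatim, so that the two agree by `rfl`.
noncomputable def wTerm (c z : ℂ) (p : ℕ × ℕ) : ℂ :=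
  ((p.1 + 1 : ℕ) : ℂ) * c ^ p.1 * (z ^ (p.1 + 1))⁻¹ *
    (((2 * p.2 + (p.1 + 1) - 1).factorial : ℂ) /
      ((p.2.factorial : ℂ) * ((p.2 + (p.1 + 1)).factorial : ℂ)) * (z ^ (2 * p.2))⁻¹)

theorem norm_wTerm_le (c z : ℂ) (n m : ℕ) :
    ‖wTerm c z (n, m)‖ ≤ ‖z‖⁻¹ * ((n + 1) * (2 * ‖c‖ / ‖z‖) ^ n * (4 / ‖z‖ ^ 2) ^ m) := by
  have hnorm : ‖wTerm c z (n, m)‖ = (n + 1) * ‖c‖ ^ n * (‖z‖ ^ (n + 1))⁻¹ *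
      (((2 * m + n).factorial : ℝ) / ((m.factorial : ℝ) * ((m + n + 1).factorial : ℝ)) *
        (‖z‖ ^ (2 * m))⁻¹) := by
    simp only [wTerm, norm_mul, norm_div, norm_inv, norm_pow, Complex.norm_natCast,
      ← add_assoc]
    push_cast
    ring
  rw [hnorm]
  calc _ ≤ (n + 1) * ‖c‖ ^ n * (‖z‖ ^ (n + 1))⁻¹ * (2 ^ n * 4 ^ m * (‖z‖ ^ (2 * m))⁻¹) := by
        gcongr
        exact factorial_div_factorial_mul_factorial_le n m
    _ = _ := by ring

theorem summable_norm_wTerm {c z : ℂ} (h2 : 2 < ‖z‖) (hc : 2 * ‖c‖ < ‖z‖) :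
    Summable fun p => ‖wTerm c z p‖ := by
  have hz : 0 < ‖z‖ := by linarith
  have hq : ‖2 * ‖c‖ / ‖z‖‖ < 1 := by
    rw [Real.norm_of_nonneg (by positivity), div_lt_one hz]
    exact hc
  have hr : 4 / ‖z‖ ^ 2 < 1 := by
    rw [div_lt_one (by positivity)]
    nlinarith
  have hgeom_n : Summable fun n : ℕ => ((n : ℝ) + 1) * (2 * ‖c‖ / ‖z‖) ^ n := by
    simpa [add_mul] using (summable_pow_mul_geometric_of_norm_lt_one 1 hq).add
      (summable_geometric_of_norm_lt_one hq)
  have hgeom_m : Summable fun m : ℕ => (4 / ‖z‖ ^ 2) ^ m :=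
    summable_geometric_of_lt_one (by positivity) hr
  refine .of_nonneg_of_le (fun _ => norm_nonneg _) (fun p => norm_wTerm_le c z p.1 p.2) ?_
  exact ((hgeom_n.mul_of_nonneg hgeom_m (fun n => by positivity) fun m => by positivity).mul_left _)

theorem hasSum_wTerm {c z : ℂ} (h2 : 2 < ‖z‖) (hc : 2 * ‖c‖ < ‖z‖) :
    HasSum (wTerm c z) (wFun c z) := by
  have hs : Summable (wTerm c z) := (summable_norm_wTerm h2 hc).of_norm
  have hrows : HasSum (fun n => ((n + 1 : ℕ) : ℂ) * c ^ n * (z ^ (n + 1))⁻¹ * phiFun (n + 1) z)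
      (∑' p, wTerm c z p) :=
    hs.hasSum.prod_fiberwise fun n => by
      rw [phiFun, ← tsum_mul_left]
      exact (hs.prod_factor n).hasSum
  rw [wFun, hrows.tsum_eq]
  exact hs.hasSum

theorem sum_wTerm_range (c z : ℂ) (k : ℕ) :
    ∑ m ∈ range (k / 2 + 1), wTerm c z (k - 2 * m, m) = sMom c k * (z ^ (k + 1))⁻¹ := by
  rw [sMom_eq_sum_range, sum_mul]
  refine sum_congr rfl fun m hm => ?_
  obtain ⟨n, rfl⟩ : ∃ n, k = n + 2 * m := ⟨k - 2 * m, by simp only [mem_range] at hm; omega⟩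
  rw [wTerm, show n + 2 * m - 2 * m = n by omega, show 2 * m + (n + 1) - 1 = n + 2 * m by omega,
    show m + (n + 1) = n + 2 * m - m + 1 by omega, show n + 2 * m + 1 = n + 1 + 2 * m by omega,
    pow_add, mul_inv]
  ring

theorem hasSum_wFun_laurent {c z : ℂ} (h2 : 2 < ‖z‖) (hc : 2 * ‖c‖ < ‖z‖) :
    HasSum (fun k => sMom c k * (z ^ (k + 1))⁻¹) (wFun c z) := by
  simpa only [sum_wTerm_range] using (hasSum_wTerm h2 hc).regroup_add_two_mul

theorem summable_norm_sMom_div_pow {c z : ℂ} (h2 : 2 < ‖z‖) (hc : 2 * ‖c‖ < ‖z‖) :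
    Summable fun k => ‖sMom c k‖ / ‖z‖ ^ (k + 1) := by
  refine .of_nonneg_of_le (fun k => by positivity) (fun k => ?_)
    (summable_norm_wTerm h2 hc).hasSum.regroup_add_two_mul.summable
  rw [div_eq_mul_inv, ← norm_pow, ← norm_inv, ← norm_mul, ← sum_wTerm_range]
  exact norm_sum_le _ _

theorem circleIntegral_zero_eq_integral (g : ℂ → ℂ) (R : ℝ) :
    (∮ z in C(0, R), g z) =
      ∫ θ in (0 : ℝ)..2 * Real.pi, g (R * exp (θ * I)) * (I * R * exp (θ * I)) := by
  simp only [circleIntegral, deriv_circleMap, circleMap, zero_add, smul_eq_mul]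
  congr 1
  ext θ
  ring

theorem hasSum_circleIntegral_of_norm_le {ι E : Type*} [Countable ι] [NormedAddCommGroup E]
    [NormedSpace ℂ E] {F : ι → ℂ → E} {f : ℂ → E} {c : ℂ} {R : ℝ} (hR : 0 ≤ R) {bound : ι → ℝ}
    (hF : ∀ i, ContinuousOn (F i) (sphere c R)) (hF_le : ∀ i, ∀ z ∈ sphere c R, ‖F i z‖ ≤ bound i)
    (h_bound : Summable bound) (h_lim : ∀ z ∈ sphere c R, HasSum (fun i => F i z) (f z)) :
    HasSum (fun i => ∮ z in C(c, R), F i z) (∮ z in C(c, R), f z) := by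
  refine intervalIntegral.hasSum_integral_of_dominated_convergence (fun i _ => R * bound i)
    (fun i => ?_) (fun i => .of_forall fun θ _ => ?_) (.of_forall fun θ _ => h_bound.mul_left R)
    intervalIntegrable_const (.of_forall fun θ _ => ?_)
  · simp only [deriv_circleMap]
    exact ((continuous_circleMap 0 R).mul continuous_const).smul
      ((hF i).comp_continuous (continuous_circleMap c R) (circleMap_mem_sphere c hR))
      |>.aestronglyMeasurable
  · rw [norm_smul, deriv_circleMap, norm_mul, norm_circleMap_zero, norm_I, mul_one,
      abs_of_nonneg hR]
    exact mul_le_mul_of_nonneg_left (hF_le i _ (circleMap_mem_sphere c hR θ)) hR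
  · exact (h_lim _ (circleMap_mem_sphere c hR θ)).const_smul _

theorem circleIntegral_zpow_mul_inv_pow (a : ℂ) {R : ℝ} (hR : 0 < R) (d : ℤ) (k : ℕ) :
    (∮ z in C(0, R), z ^ d * (a * (z ^ (k + 1))⁻¹)) =
      if (k : ℤ) = d then 2 * Real.pi * I * a else 0 := by
  have hsphere : Set.EqOn (fun z => z ^ d * (a * (z ^ (k + 1))⁻¹))
      (fun z => a * (z - 0) ^ (d - (k + 1))) (sphere 0 R) := fun z hz => by
    have hz0 : z ≠ 0 := ne_of_mem_sphere hz hR.ne'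
    simp only [sub_zero, zpow_sub₀ hz0, ← zpow_natCast, Nat.cast_add, Nat.cast_one]
    ring
  rw [circleIntegral.integral_congr hR.le hsphere, circleIntegral.integral_const_mul]
  split_ifs with hkd
  · rw [← hkd, show (k : ℤ) - (k + 1) = -1 by ring]
    simp only [zpow_neg_one, circleIntegral.integral_sub_center_inv 0 hR.ne', mul_comm]
  · rw [circleIntegral.integral_sub_zpow_of_ne (by omega), mul_zero]

section LaurentMoments

variable {a : ℕ → ℂ} {f : ℂ → ℂ} {R : ℝ}

theorem hasSum_circleIntegral_zpow_mul_of_hasSum (hR : 0 < R)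
    (ha : Summable fun k => ‖a k‖ / R ^ (k + 1))
    (hf : ∀ z ∈ sphere (0 : ℂ) R, HasSum (fun k => a k * (z ^ (k + 1))⁻¹) (f z)) (d : ℤ) :
    HasSum (fun k : ℕ => if (k : ℤ) = d then 2 * Real.pi * I * a k else 0)
      (∮ z in C(0, R), z ^ d * f z) := by
  have hcont : ∀ k, ContinuousOn (fun z : ℂ => z ^ d * (a k * (z ^ (k + 1))⁻¹)) (sphere 0 R) :=
    fun k => by
      have h0 : ∀ z ∈ sphere (0 : ℂ) R, z ≠ 0 := fun z hz => ne_of_mem_sphere hz hR.ne'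
      exact ((continuousOn_zpow₀ d).mono h0).mul (continuousOn_const.mul
        ((continuous_pow _).continuousOn.inv₀ fun z hz => pow_ne_zero _ (h0 z hz)))
  have hnorm : ∀ k, ∀ z ∈ sphere (0 : ℂ) R,
      ‖z ^ d * (a k * (z ^ (k + 1))⁻¹)‖ ≤ R ^ d * (‖a k‖ / R ^ (k + 1)) := fun k z hz => by
    rw [mem_sphere_zero_iff_norm] at hz
    simp only [norm_mul, norm_zpow, norm_inv, norm_pow, hz, div_eq_mul_inv, le_refl]
  simpa only [circleIntegral_zpow_mul_inv_pow _ hR] using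
    hasSum_circleIntegral_of_norm_le hR.le hcont hnorm (ha.mul_left _)
      fun z hz => (hf z hz).mul_left (z ^ d)

theorem circleIntegral_pow_mul_of_hasSum (hR : 0 < R) (ha : Summable fun k => ‖a k‖ / R ^ (k + 1))
    (hf : ∀ z ∈ sphere (0 : ℂ) R, HasSum (fun k => a k * (z ^ (k + 1))⁻¹) (f z)) (d : ℕ) :
    (∮ z in C(0, R), z ^ d * f z) = 2 * Real.pi * I * a d := by
  have h := hasSum_circleIntegral_zpow_mul_of_hasSum hR ha hf d
  simp only [zpow_natCast, Nat.cast_inj] at h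
  rw [h.unique (hasSum_single d fun k hk => if_neg hk), if_pos rfl]

theorem circleIntegral_zpow_mul_of_hasSum_of_neg (hR : 0 < R)
    (ha : Summable fun k => ‖a k‖ / R ^ (k + 1))
    (hf : ∀ z ∈ sphere (0 : ℂ) R, HasSum (fun k => a k * (z ^ (k + 1))⁻¹) (f z)) {d : ℤ}
    (hd : d < 0) : (∮ z in C(0, R), z ^ d * f z) = 0 := by
  have h := hasSum_circleIntegral_zpow_mul_of_hasSum hR ha hf d
  simp only [show ∀ k : ℕ, (k : ℤ) ≠ d by omega, if_false] at h
  exact h.unique hasSum_zero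

end LaurentMoments

/-- **Moments of the complex weight `w` on circles `|z| = R`, `R > R₀ = max(2, 2|c|)`:**
`(1/(2πi)) ∮_{|z|=R} z^d w(z) dz = s_d` for `d ≥ 0` and `= 0` for `d ≤ -1`; equivalently, `w`
has the Laurent expansion `w(z) = Σ_{k=0}^∞ s_k z^{-k-1}` on `|z| > R₀`. -/
theorem wFun_moments (c : ℂ) (R : ℝ) (hR : max 2 (2 * ‖c‖) < R) :
    (∀ d : ℕ,
      (2 * Real.pi * Complex.I)⁻¹ *
        ∫ θ in (0:ℝ)..(2 * Real.pi),
          ((R : ℂ) * Complex.exp ((θ : ℂ) * Complex.I)) ^ d *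
            wFun c ((R : ℂ) * Complex.exp ((θ : ℂ) * Complex.I)) *
            (Complex.I * (R : ℂ) * Complex.exp ((θ : ℂ) * Complex.I))
        = sMom c d) ∧
    (∀ d : ℤ, d < 0 →
      (2 * Real.pi * Complex.I)⁻¹ *
        ∫ θ in (0:ℝ)..(2 * Real.pi),
          ((R : ℂ) * Complex.exp ((θ : ℂ) * Complex.I)) ^ d *
            wFun c ((R : ℂ) * Complex.exp ((θ : ℂ) * Complex.I)) *
            (Complex.I * (R : ℂ) * Complex.exp ((θ : ℂ) * Complex.I))
        = 0) ∧
    (∀ z : ℂ, max 2 (2 * ‖c‖) < ‖z‖ →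
      wFun c z = ∑' k : ℕ, sMom c k * (z ^ (k + 1))⁻¹) := by
  obtain ⟨h2, hc⟩ := max_lt_iff.mp hR
  have hR0 : 0 < R := by linarith
  have hnormR : ‖(R : ℂ)‖ = R := Complex.norm_of_nonneg hR0.le
  have hsum : Summable fun k => ‖sMom c k‖ / R ^ (k + 1) := by
    simpa only [hnormR] using
      summable_norm_sMom_div_pow (z := R) (by rwa [hnormR]) (by rwa [hnormR])
  have hlaurent : ∀ z ∈ sphere (0 : ℂ) R, HasSum (fun k => sMom c k * (z ^ (k + 1))⁻¹) (wFun c z) :=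
    fun z hz => by
      rw [mem_sphere_zero_iff_norm] at hz
      exact hasSum_wFun_laurent (hz ▸ h2) (hz ▸ hc)
  refine ⟨fun d => ?_, fun d hd => ?_, fun z hz => ?_⟩
  · rw [← circleIntegral_zero_eq_integral (fun z => z ^ d * wFun c z),
      circleIntegral_pow_mul_of_hasSum hR0 hsum hlaurent, inv_mul_cancel_left₀ two_pi_I_ne_zero]
  · rw [← circleIntegral_zero_eq_integral (fun z => z ^ d * wFun c z),
      circleIntegral_zpow_mul_of_hasSum_of_neg hR0 hsum hlaurent hd, mul_zero]
  · obtain ⟨h2, hc⟩ := max_lt_iff.mp hz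
    exact (hasSum_wFun_laurent h2 hc).tsum_eq.symm
end

section
/- Let c ∈ ℂ, R₀ := max(2, 2|c|), and let p_n ∈ ℂ[λ] (n ≥ 0) be defined by p_0 = 1, p_1 = λ − c, and p_{n+1} = λ·p_n − p_{n−1} for n ≥ 1. Then there exist a real number α > R₀ and a continuous function ρ : [0, 2π] → ℝ with ρ(θ) ≥ 0 for all θ ∈ (0, 2π), such that for all n, m ≥ 0: ∫₀^{2π} p_n(α e^{iθ}) · p_m(α e^{iθ}) · ρ(θ) dθ = δ_{n,m}. -/
/-!
Let `L` be the linear functional on `ℂ[X]` with `L (p n) = δ_{n,0}`. By the three-term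
recurrence, multiplication by `X` acts on the basis `(p n)` through the symmetric matrix `J_c`;
this forces `L (p n * p m) = δ_{n,m}` and gives `‖L (X ^ k)‖ ≤ (2 + ‖c‖) ^ k`. On the circle of
radius `α = 4 (2 + ‖c‖)` a weight `ρ` represents `L` as soon as its Fourier coefficients
`∫ e^{ikθ} ρ` equal `t k = L (X ^ k) / α ^ k` for `k ≥ 0`. Since `t 0 = 1` and `‖t k‖ ≤ 4⁻ᵏ`,
the real function `ρ = (2 Re ∑ t k e^{-ikθ} - 1) / 2π` has these coefficients and is
nonnegative: the constant term dominates the rest of the series.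
-/

open Polynomial Complex ComplexConjugate MeasureTheory Real

namespace RankOnePerturbation

section Algebra

variable {R : Type*} [CommRing R] (c : R)

noncomputable def jacobiPoly : ℕ → R[X]
  | 0 => 1
  | 1 => X - C c
  | n + 2 => X * jacobiPoly (n + 1) - jacobiPoly n

@[simp] lemma jacobiPoly_zero : jacobiPoly c 0 = 1 := rfl

@[simp] lemma jacobiPoly_one : jacobiPoly c 1 = X - C c := rfl

lemma jacobiPoly_add_two (n : ℕ) :
    jacobiPoly c (n + 2) = X * jacobiPoly c (n + 1) - jacobiPoly c n := rfl

lemma X_mul_jacobiPoly_zero : X * jacobiPoly c 0 = jacobiPoly c 1 + C c * jacobiPoly c 0 := by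
  simp

lemma X_mul_jacobiPoly_succ (n : ℕ) :
    X * jacobiPoly c (n + 1) = jacobiPoly c (n + 2) + jacobiPoly c n := by
  rw [jacobiPoly_add_two, sub_add_cancel]

lemma eq_jacobiPoly {p : ℕ → R[X]} (hp0 : p 0 = 1) (hp1 : p 1 = X - C c)
    (hrec : ∀ n, 1 ≤ n → p (n + 1) = X * p n - p (n - 1)) : ∀ n, p n = jacobiPoly c n
  | 0 => hp0
  | 1 => hp1
  | n + 2 => by
    rw [hrec (n + 1) n.succ_pos, Nat.add_sub_cancel, eq_jacobiPoly hp0 hp1 hrec (n + 1),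
      eq_jacobiPoly hp0 hp1 hrec n, jacobiPoly_add_two]

lemma monic_jacobiPoly_and_natDegree [Nontrivial R] :
    ∀ n, (jacobiPoly c n).Monic ∧ (jacobiPoly c n).natDegree = n
  | 0 => by simp
  | 1 => ⟨monic_X_sub_C c, natDegree_X_sub_C c⟩
  | n + 2 => by
    obtain ⟨hm, hd⟩ := monic_jacobiPoly_and_natDegree (n + 1)
    have hXm : (X * jacobiPoly c (n + 1)).Monic := monic_X.mul hm
    have hXd : (X * jacobiPoly c (n + 1)).natDegree = n + 2 := by
      rw [monic_X.natDegree_mul hm, natDegree_X, hd, add_comm]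
    have hlt : (jacobiPoly c n).natDegree < (X * jacobiPoly c (n + 1)).natDegree := by
      rw [hXd, (monic_jacobiPoly_and_natDegree n).2]; omega
    rw [jacobiPoly_add_two]
    exact ⟨hXm.sub_of_left (degree_lt_degree hlt),
      by rw [natDegree_sub_eq_left_of_natDegree_lt hlt, hXd]⟩

theorem apply_jacobiPoly_mul_jacobiPoly (L : R[X] →ₗ[R] R)
    (hL : ∀ n, L (jacobiPoly c n) = if n = 0 then 1 else 0) :
    ∀ n m, L (jacobiPoly c n * jacobiPoly c m) = if n = m then 1 else 0
  | 0, m => by simpa [eq_comm] using hL m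
  | 1, 0 => by
    rw [jacobiPoly_one, sub_mul, X_mul_jacobiPoly_zero, add_sub_cancel_right]
    exact hL 1
  | 1, m + 1 => by
    rw [jacobiPoly_one, sub_mul, X_mul_jacobiPoly_succ, C_mul']
    simp [hL]
  | n + 2, 0 => by
    rw [jacobiPoly_add_two, sub_mul, mul_comm X, mul_assoc, X_mul_jacobiPoly_zero, mul_add,
      C_mul', mul_smul_comm]
    simp only [map_sub, map_add, map_smul, apply_jacobiPoly_mul_jacobiPoly L hL (n + 1),
      apply_jacobiPoly_mul_jacobiPoly L hL n]
    rcases n with _ | n <;> simp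
  | n + 2, m + 1 => by
    rw [jacobiPoly_add_two, sub_mul, mul_comm X, mul_assoc, X_mul_jacobiPoly_succ, mul_add]
    simp only [map_sub, map_add, apply_jacobiPoly_mul_jacobiPoly L hL (n + 1),
      apply_jacobiPoly_mul_jacobiPoly L hL n]
    split_ifs <;> first | omega | simp

end Algebra

section Functional

variable {R : Type*} [CommRing R] [IsDomain R] (c : R)

noncomputable def jacobiBasis : Module.Basis ℕ R R[X] :=
  Sequence.basis
    ⟨jacobiPoly c, fun n => by
      rw [degree_eq_natDegree (monic_jacobiPoly_and_natDegree c n).1.ne_zero,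
        (monic_jacobiPoly_and_natDegree c n).2]⟩
    fun n => by simp [((monic_jacobiPoly_and_natDegree c n).1).leadingCoeff]

/-- The spectral functional `q ↦ ⟨e₀, q(J_c) e₀⟩` of `J_c`. -/
noncomputable def jacobiFunctional : R[X] →ₗ[R] R := (jacobiBasis c).coord 0

lemma jacobiFunctional_jacobiPoly (n : ℕ) :
    jacobiFunctional c (jacobiPoly c n) = if n = 0 then 1 else 0 := by
  have : jacobiBasis c n = jacobiPoly c n := Sequence.basis_eq_self _ _ n
  rw [jacobiFunctional, Module.Basis.coord_apply, ← this, Module.Basis.repr_self,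
    Finsupp.single_apply]

end Functional

section MomentBound

variable {𝕜 : Type*} [NormedField 𝕜] (c : 𝕜)

theorem norm_apply_X_pow_mul_jacobiPoly_le (L : 𝕜[X] →ₗ[𝕜] 𝕜)
    (hL : ∀ n, ‖L (jacobiPoly c n)‖ ≤ 1) :
    ∀ k n, ‖L (X ^ k * jacobiPoly c n)‖ ≤ (2 + ‖c‖) ^ k
  | 0, n => by simpa using hL n
  | k + 1, 0 => by
    have ih := norm_apply_X_pow_mul_jacobiPoly_le L hL k
    have hB : 0 ≤ (2 + ‖c‖) ^ k := by positivity
    rw [pow_succ, mul_assoc, X_mul_jacobiPoly_zero, mul_add, mul_left_comm, C_mul', map_add,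
      map_smul, smul_eq_mul]
    calc _ ≤ ‖L (X ^ k * jacobiPoly c 1)‖ + ‖c‖ * ‖L (X ^ k * jacobiPoly c 0)‖ :=
          (norm_add_le _ _).trans_eq (by rw [norm_mul])
      _ ≤ (2 + ‖c‖) ^ k + ‖c‖ * (2 + ‖c‖) ^ k := by gcongr <;> apply ih
      _ ≤ (2 + ‖c‖) ^ (k + 1) := by rw [pow_succ]; nlinarith
  | k + 1, n + 1 => by
    have ih := norm_apply_X_pow_mul_jacobiPoly_le L hL k
    have hB : 0 ≤ (2 + ‖c‖) ^ k := by positivity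
    rw [pow_succ, mul_assoc, X_mul_jacobiPoly_succ, mul_add, map_add]
    calc _ ≤ (2 + ‖c‖) ^ k + (2 + ‖c‖) ^ k :=
          (norm_add_le _ _).trans (add_le_add (ih _) (ih _))
      _ ≤ (2 + ‖c‖) ^ (k + 1) := by rw [pow_succ]; nlinarith [norm_nonneg c]

end MomentBound

lemma norm_exp_int_mul_I (n : ℤ) (θ : ℝ) : ‖exp (n * θ * I)‖ = 1 := by
  simp [Complex.norm_exp]

lemma integral_exp_int_mul_I (n : ℤ) :
    ∫ θ in (0 : ℝ)..2 * π, exp (n * θ * I) = if n = 0 then 2 * (π : ℂ) else 0 := by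
  split_ifs with hn
  · simp [hn]
  · have hne : (n : ℂ) * I ≠ 0 := by simpa [I_ne_zero] using hn
    simp_rw [mul_right_comm _ _ I]
    rw [integral_exp_mul_complex hne, ofReal_zero, mul_zero, Complex.exp_zero,
      show (n : ℂ) * I * ↑(2 * π) = n * (2 * π * I) by push_cast; ring,
      exp_int_mul_two_pi_mul_I, sub_self, zero_div]

section TrigSeries

variable {a : ℕ → ℂ}

noncomputable def trigSeries (a : ℕ → ℂ) (e : ℕ → ℤ) (θ : ℝ) : ℂ :=
  ∑' k, a k * exp (e k * θ * I)

lemma summable_trigSeries (ha : Summable fun k => ‖a k‖) (e : ℕ → ℤ) (θ : ℝ) :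
    Summable fun k => a k * exp (e k * θ * I) :=
  ha.of_norm_bounded fun k => by rw [norm_mul, norm_exp_int_mul_I, mul_one]

lemma norm_trigSeries_le (ha : Summable fun k => ‖a k‖) (e : ℕ → ℤ) (θ : ℝ) :
    ‖trigSeries a e θ‖ ≤ ∑' k, ‖a k‖ :=
  (norm_tsum_le_tsum_norm (by simpa [norm_exp_int_mul_I] using ha)).trans_eq
    (by simp [norm_exp_int_mul_I])

lemma continuous_trigSeries (ha : Summable fun k => ‖a k‖) (e : ℕ → ℤ) :
    Continuous (trigSeries a e) :=
  continuous_tsum (fun k => by fun_prop) ha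
    fun k θ => by rw [norm_mul, norm_exp_int_mul_I, mul_one]

lemma integral_trigSeries (ha : Summable fun k => ‖a k‖) (e : ℕ → ℤ) :
    ∫ θ in (0 : ℝ)..2 * π, trigSeries a e θ = 2 * π * ∑' k, if e k = 0 then a k else 0 := by
  have hsum := intervalIntegral.hasSum_integral_of_dominated_convergence (a := 0) (b := 2 * π)
    (fun k _ => ‖a k‖)
    (fun k =>
      (by fun_prop : Continuous fun θ : ℝ => a k * exp (e k * θ * I)).aestronglyMeasurable)
    (fun k => ae_of_all _ fun θ _ => by rw [norm_mul, norm_exp_int_mul_I, mul_one])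
    (ae_of_all _ fun _ _ => ha) (intervalIntegrable_const (μ := volume))
    (ae_of_all _ fun θ _ => (summable_trigSeries ha e θ).hasSum)
  unfold trigSeries
  rw [← hsum.tsum_eq, ← tsum_mul_left]
  congr 1 with k
  rw [intervalIntegral.integral_const_mul, integral_exp_int_mul_I]
  split_ifs <;> ring

lemma exp_mul_trigSeries (n : ℤ) (e : ℕ → ℤ) (θ : ℝ) :
    exp (n * θ * I) * trigSeries a e θ = trigSeries a (fun k => n + e k) θ := by
  unfold trigSeries
  rw [← tsum_mul_left]
  congr 1 with k
  rw [mul_left_comm, ← Complex.exp_add]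
  push_cast
  ring_nf

lemma conj_trigSeries (e : ℕ → ℤ) (θ : ℝ) :
    conj (trigSeries a e θ) = trigSeries (fun k => conj (a k)) (fun k => -e k) θ := by
  unfold trigSeries
  rw [conj_tsum]
  congr 1 with k
  rw [map_mul, ← Complex.exp_conj]
  simp

end TrigSeries

section Weight

variable {t : ℕ → ℂ}

/-- Taking `2 Re` makes the weight real; the conjugate series this adds meets `e^{ijθ}`, `j ≥ 0`,
only at `j = 0`, where the `- 1` cancels it as soon as `t 0 = 1`. -/
noncomputable def weight (t : ℕ → ℂ) (θ : ℝ) : ℝ :=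
  (2 * (trigSeries t (fun k => -k) θ).re - 1) / (2 * π)

lemma continuous_weight (ht : Summable fun k => ‖t k‖) : Continuous (weight t) := by
  have := continuous_trigSeries ht (fun k => -k)
  unfold weight
  fun_prop

lemma weight_nonneg (ht : Summable fun k => ‖t k‖) (h0 : t 0 = 1)
    (htail : ∑' k, ‖t (k + 1)‖ ≤ 1 / 2) (θ : ℝ) : 0 ≤ weight t θ := by
  have htail' : Summable fun k => ‖t (k + 1)‖ := (summable_nat_add_iff 1).mpr ht
  obtain ⟨g, hsplit, hg⟩ : ∃ g, trigSeries t (fun k => -k) θ = 1 + g ∧ ‖g‖ ≤ 1 / 2 := by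
    refine ⟨_, ?_, (norm_trigSeries_le htail' (fun k => -(k + 1 : ℕ)) θ).trans htail⟩
    unfold trigSeries
    rw [(summable_trigSeries ht _ θ).tsum_eq_zero_add]
    simp [h0]
  have hre := (abs_le.mp ((abs_re_le_norm g).trans hg)).1
  unfold weight
  rw [hsplit, add_re, one_re]
  apply div_nonneg _ (by positivity)
  linarith

lemma integral_exp_mul_weight (ht : Summable fun k => ‖t k‖) (h0 : t 0 = 1) (j : ℕ) :
    ∫ θ in (0 : ℝ)..2 * π, exp (j * θ * I) * weight t θ = t j := by
  have ht' : Summable fun k => ‖conj (t k)‖ := by simpa using ht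
  have hpoint : ∀ θ : ℝ, exp (j * θ * I) * weight t θ
      = (trigSeries t (fun k => j + -k) θ
          + trigSeries (fun k => conj (t k)) (fun k => j + - -k) θ
          - exp ((j : ℤ) * θ * I)) / (2 * π) := by
    intro θ
    simp only [weight, ofReal_div, ofReal_sub, ofReal_mul, re_eq_add_conj, conj_trigSeries]
    rw [← exp_mul_trigSeries, ← exp_mul_trigSeries]
    push_cast
    field_simp
  simp_rw [hpoint]
  have hc₁ := continuous_trigSeries ht (fun k => j + -k)
  have hc₂ := continuous_trigSeries ht' (fun k => j + - -k)
  rw [intervalIntegral.integral_div, intervalIntegral.integral_sub, intervalIntegral.integral_add,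
    integral_trigSeries ht, integral_trigSeries ht', integral_exp_int_mul_I]
  · simp_rw [show ∀ k : ℕ, ((j : ℤ) + -k = 0 ↔ k = j) by omega,
      show ∀ k : ℕ, ((j : ℤ) + - -k = 0 ↔ k = 0 ∧ j = 0) by omega, ite_and, Nat.cast_eq_zero]
    rw [tsum_ite_eq j t, tsum_ite_eq 0 (fun k => if j = 0 then conj (t k) else 0), h0, map_one]
    split_ifs <;> field_simp <;> ring
  all_goals exact Continuous.intervalIntegrable (by fun_prop) _ _

end Weight

theorem integral_eval_mul_eq_of_moments {a b : ℝ} {z w : ℝ → ℂ} (hz : Continuous z)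
    (hw : Continuous w) (L : ℂ[X] →ₗ[ℂ] ℂ) (h : ∀ j, ∫ θ in a..b, z θ ^ j * w θ = L (X ^ j))
    (q : ℂ[X]) : ∫ θ in a..b, q.eval (z θ) * w θ = L q := by
  induction q using Polynomial.induction_on' with
  | add q r hq hr =>
    simp_rw [eval_add, add_mul]
    rw [intervalIntegral.integral_add (Continuous.intervalIntegrable (by fun_prop) _ _)
      (Continuous.intervalIntegrable (by fun_prop) _ _), hq, hr, map_add]
  | monomial j s =>
    simp_rw [eval_monomial, mul_assoc]
    rw [intervalIntegral.integral_const_mul, h, ← C_mul_X_pow_eq_monomial, C_mul', map_smul,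
      smul_eq_mul]

section Moments

variable (c : ℂ)

noncomputable def radius : ℝ := 4 * (2 + ‖c‖)

lemma lt_radius : max 2 (2 * ‖c‖) < radius c := by
  unfold radius
  exact max_lt (by linarith [norm_nonneg c]) (by linarith [norm_nonneg c])

noncomputable def momentRatio (k : ℕ) : ℂ := jacobiFunctional c (X ^ k) / (radius c : ℂ) ^ k

lemma momentRatio_zero : momentRatio c 0 = 1 := by
  simpa [momentRatio] using jacobiFunctional_jacobiPoly c 0

lemma norm_momentRatio_le (k : ℕ) : ‖momentRatio c k‖ ≤ (1 / 4) ^ k := by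
  have hL : ∀ n, ‖jacobiFunctional c (jacobiPoly c n)‖ ≤ 1 := fun n => by
    rw [jacobiFunctional_jacobiPoly]; split_ifs <;> simp
  have hk := norm_apply_X_pow_mul_jacobiPoly_le c _ hL k 0
  rw [jacobiPoly_zero, mul_one] at hk
  have hr : 0 < radius c := by unfold radius; positivity
  rw [momentRatio, norm_div, norm_pow, norm_real, Real.norm_of_nonneg hr.le,
    div_le_iff₀ (pow_pos hr k), ← mul_pow, radius]
  exact hk.trans_eq (by ring)

lemma summable_norm_momentRatio : Summable fun k => ‖momentRatio c k‖ :=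
  (summable_geometric_of_lt_one (by norm_num) (by norm_num)).of_nonneg_of_le
    (fun _ => norm_nonneg _) (norm_momentRatio_le c)

lemma tsum_norm_momentRatio_succ_le : ∑' k, ‖momentRatio c (k + 1)‖ ≤ 1 / 2 := by
  have hgeom : Summable fun k : ℕ => (1 / 4 : ℝ) ^ (k + 1) :=
    (summable_nat_add_iff 1).mpr (summable_geometric_of_lt_one (by norm_num) (by norm_num))
  calc ∑' k, ‖momentRatio c (k + 1)‖ ≤ ∑' k : ℕ, (1 / 4 : ℝ) ^ (k + 1) :=
        ((summable_nat_add_iff 1).mpr (summable_norm_momentRatio c)).tsum_le_tsum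
          (fun k => norm_momentRatio_le c (k + 1)) hgeom
    _ = 1 / 3 := by
        simp_rw [pow_succ]
        rw [tsum_mul_right, tsum_geometric_of_lt_one (by norm_num) (by norm_num)]
        norm_num
    _ ≤ 1 / 2 := by norm_num

lemma integral_pow_mul_weight_momentRatio (j : ℕ) :
    ∫ θ in (0 : ℝ)..2 * π, ((radius c : ℂ) * exp (θ * I)) ^ j * weight (momentRatio c) θ
      = jacobiFunctional c (X ^ j) := by
  have hr : (radius c : ℂ) ≠ 0 := by
    rw [ofReal_ne_zero]; unfold radius; positivity
  simp_rw [mul_pow, ← Complex.exp_nat_mul, ← mul_assoc, mul_assoc ((radius c : ℂ) ^ j)]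
  rw [intervalIntegral.integral_const_mul,
    integral_exp_mul_weight (summable_norm_momentRatio c) (momentRatio_zero c), momentRatio]
  field_simp

end Moments

end RankOnePerturbation

open RankOnePerturbation Polynomial

/-- **Nonnegative orthogonality weight for the complex rank-one perturbation of the free Jacobi
matrix:** there exist `α > R₀ = max(2, 2|c|)` and a continuous function `ρ` on `[0, 2π]`,
nonnegative on `(0, 2π)`, such that
`∫₀^{2π} p_n(α e^{iθ}) p_m(α e^{iθ}) ρ(θ) dθ = δ_{n,m}` (no conjugation on the polynomials). -/
theorem rank_one_perturbation_nonnegative_weight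
    (c : ℂ) (p : ℕ → Polynomial ℂ)
    (hp0 : p 0 = 1) (hp1 : p 1 = Polynomial.X - Polynomial.C c)
    (hrec : ∀ n : ℕ, 1 ≤ n → p (n + 1) = Polynomial.X * p n - p (n - 1)) :
    ∃ (α : ℝ) (ρ : ℝ → ℝ),
      max 2 (2 * ‖c‖) < α ∧
      ContinuousOn ρ (Set.Icc 0 (2 * Real.pi)) ∧
      (∀ θ ∈ Set.Ioo 0 (2 * Real.pi), 0 ≤ ρ θ) ∧
      (∀ n m : ℕ,
        ∫ θ in (0:ℝ)..(2 * Real.pi),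
          (p n).eval ((α : ℂ) * Complex.exp ((θ : ℂ) * Complex.I)) *
            (p m).eval ((α : ℂ) * Complex.exp ((θ : ℂ) * Complex.I)) * (ρ θ : ℂ)
        = if n = m then 1 else 0) := by
  have hsum := summable_norm_momentRatio c
  refine ⟨radius c, weight (momentRatio c), lt_radius c, (continuous_weight hsum).continuousOn,
    fun θ _ => weight_nonneg hsum (momentRatio_zero c) (tsum_norm_momentRatio_succ_le c) θ,
    fun n m => ?_⟩
  simp_rw [eq_jacobiPoly c hp0 hp1 hrec, ← eval_mul]
  have hw : Continuous fun θ => (weight (momentRatio c) θ : ℂ) :=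
    continuous_ofReal.comp (continuous_weight hsum)
  rw [integral_eval_mul_eq_of_moments (by fun_prop) hw _
      (integral_pow_mul_weight_momentRatio c),
    apply_jacobiPoly_mul_jacobiPoly c _ (jacobiFunctional_jacobiPoly c)]
end
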